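/- arXiv:math/0207083 — 7 statements merged into one kernel-verified Lean document; each statement's English description precedes it below -/
import Mathlib

section
/- Let A = K{x} be the free magma algebra over a field K of characteristic 0, D the derivation with D(x)=1, and L left multiplication by x. For f ∈ A homogeneous of degree n, the element g = Σ_{k=1}^{n+1} ((−1)^{k−1}/k!) L^k(D^{k−1} f) satisfies D(g) = f. -/
noncomputable section

/-- The free unital magma algebra `K{x}` in one variable. -/
abbrev FreeMagmaAlgebra1 (K : Type*) [Field K] : Type _ :=
  MonoidAlgebra K (WithOne (FreeMagma Unit))

/-- The generator `x` of `K{x}`. -/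
def genx (K : Type*) [Field K] : FreeMagmaAlgebra1 K :=
  MonoidAlgebra.of K (WithOne (FreeMagma Unit)) (FreeMagma.of ())

/-- Degree of a monomial: the unit has degree 0, a magma monomial has its length. -/
def degW : WithOne (FreeMagma Unit) → ℕ :=
  WithOne.recOneCoe 0 fun t => t.length

/-- `f` is homogeneous of degree `n`. -/
def IsHomog {K : Type*} [Field K] (f : FreeMagmaAlgebra1 K) (n : ℕ) : Prop :=
  ∀ m ∈ f.coeff.support, degW m = n

/-! In `End_K(A)` the derivation `D` and the left multiplication `L` by `x` satisfy the Weyl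
relation `D L - L D = 1`, because `D x = 1`. In an algebra over a field of characteristic 0,
`a b - b a = 1` gives `a b^k a^(k-1) = k b^(k-1) a^(k-1) + b^k a^k`, so `a` times
`Σ_{k=1}^{m} (-1)^(k-1)/k! b^k a^(k-1)` telescopes to `1 - (-1)^m/m! b^m a^m`.
Finally `D` lowers the degree of homogeneous elements by one and kills constants, so
`D^(n+1) f = 0` for `f` homogeneous of degree `n`, and the remainder term vanishes at `f`
for `m = n + 1`. -/

section Weyl
variable {R : Type*} [Ring R] {a b : R}

theorem mul_pow_succ_sub_pow_succ_mul (h : a * b - b * a = 1) (k : ℕ) :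
    a * b ^ (k + 1) - b ^ (k + 1) * a = (k + 1) • b ^ k := by
  induction k with
  | zero => simpa using h
  | succ k ih =>
    calc a * b ^ (k + 2) - b ^ (k + 2) * a
        = (a * b ^ (k + 1) - b ^ (k + 1) * a) * b + b ^ (k + 1) * (a * b - b * a) := by
          noncomm_ring
      _ = (k + 2) • b ^ (k + 1) := by
          rw [ih, h, smul_mul_assoc, ← pow_succ, mul_one]; module

variable (K : Type*) [Field K] [CharZero K] [Algebra K R]

theorem mul_sum_Icc_eq_one_sub_of_mul_sub_mul_eq_one (h : a * b - b * a = 1) (n : ℕ) :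
    a * ∑ k ∈ Finset.Icc 1 n, ((-1 : K) ^ (k - 1) / k.factorial) • (b ^ k * a ^ (k - 1))
      = 1 - ((-1 : K) ^ n / n.factorial) • (b ^ n * a ^ n) := by
  induction n with
  | zero => simp
  | succ n ih =>
    have hstep :
        a * (b ^ (n + 1) * a ^ n) = (n + 1) • (b ^ n * a ^ n) + b ^ (n + 1) * a ^ (n + 1) := by
      rw [← mul_assoc, eq_add_of_sub_eq (mul_pow_succ_sub_pow_succ_mul h n), add_mul,
        smul_mul_assoc, mul_assoc, ← pow_succ']
    have hcoeff : ((-1 : K) ^ n / (n + 1).factorial) * (n + 1) = (-1) ^ n / n.factorial := by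
      rw [Nat.factorial_succ, Nat.cast_mul]; field_simp; push_cast; ring
    -- the new summand contributes `u n - u (n + 1)`, where `u k = ((-1)^k/k!) • b^k a^k`
    rw [Finset.sum_Icc_succ_top (by omega), mul_add, ih, Nat.add_sub_cancel, mul_smul_comm,
      hstep, smul_add, ← Nat.cast_smul_eq_nsmul K, smul_smul, Nat.cast_add_one, hcoeff,
      pow_succ (-1 : K) n, mul_neg_one, neg_div, neg_smul]
    abel

end Weyl

section Leibniz
variable {K A : Type*} [Semiring K] [NonAssocRing A] [Module K A] [SMulCommClass K A A]
  {D : A →ₗ[K] A}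

theorem mul_mulLeft_sub_mulLeft_mul_eq_one
    (hD : ∀ f g : A, D (f * g) = D f * g + f * D g) {x : A} (hDx : D x = 1) :
    (D : Module.End K A) * LinearMap.mulLeft K x - LinearMap.mulLeft K x * D = 1 := by
  ext h
  simp [hD, hDx]

end Leibniz

theorem degW_mul (a b : WithOne (FreeMagma Unit)) : degW (a * b) = degW a + degW b := by
  cases a <;> cases b <;> simp [degW, ← WithOne.coe_mul]

theorem degW_coe (t : FreeMagma Unit) : degW t = t.length := rfl

namespace FreeMagmaAlgebra1
variable {K : Type*} [Field K]

variable (K) in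
def homogeneous (n : ℕ) : Submodule K (FreeMagmaAlgebra1 K) :=
  MonoidAlgebra.supported K K (degW ⁻¹' {n})

theorem isHomog_iff_mem_homogeneous {f : FreeMagmaAlgebra1 K} {n : ℕ} :
    IsHomog f n ↔ f ∈ homogeneous K n := Iff.rfl

theorem of_mem_homogeneous (m : WithOne (FreeMagma Unit)) :
    MonoidAlgebra.of K _ m ∈ homogeneous K (degW m) := by
  intro x hx
  rw [Finset.mem_singleton.1 (Finsupp.support_single_subset hx)]
  rfl

theorem mul_mem_homogeneous {f g : FreeMagmaAlgebra1 K} {a b : ℕ} (hf : f ∈ homogeneous K a)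
    (hg : g ∈ homogeneous K b) : f * g ∈ homogeneous K (a + b) := by
  classical
  intro m hm
  obtain ⟨y, hy, z, hz, rfl⟩ := Finset.mem_mul.1 (MonoidAlgebra.support_coeff_mul_subset f g hm)
  simp only [Set.mem_preimage, Set.mem_singleton_iff, degW_mul]
  rw [hf hy, hg hz]

theorem homogeneous_le_comap {p : Submodule K (FreeMagmaAlgebra1 K)}
    {φ : FreeMagmaAlgebra1 K →ₗ[K] FreeMagmaAlgebra1 K} {n : ℕ}
    (h : ∀ m, degW m = n → φ (MonoidAlgebra.of K _ m) ∈ p) : homogeneous K n ≤ p.comap φ := by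
  rw [homogeneous, MonoidAlgebra.supported_eq_span_single, Submodule.span_le]
  rintro _ ⟨m, hm, rfl⟩
  exact h m hm

variable {D : FreeMagmaAlgebra1 K →ₗ[K] FreeMagmaAlgebra1 K}

theorem map_of_coe_mem_homogeneous
    (hD : ∀ f g : FreeMagmaAlgebra1 K, D (f * g) = D f * g + f * D g) (hDx : D (genx K) = 1)
    (t : FreeMagma Unit) :
    D (MonoidAlgebra.of K _ t) ∈ homogeneous K (t.length - 1) := by
  induction t with
  | ih1 u =>
    rw [show MonoidAlgebra.of K _ (FreeMagma.of u : WithOne _) = genx K from rfl, hDx,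
      ← map_one (MonoidAlgebra.of K _)]
    exact of_mem_homogeneous 1
  | ih2 t₁ t₂ ih₁ ih₂ =>
    rw [WithOne.coe_mul, map_mul, hD]
    have h₁ := mul_mem_homogeneous ih₁ (of_mem_homogeneous (K := K) t₂)
    have h₂ := mul_mem_homogeneous (of_mem_homogeneous (K := K) t₁) ih₂
    rw [degW_coe] at h₁ h₂
    have e₁ : t₁.length - 1 + t₂.length = (t₁ * t₂).length - 1 := by
      simp only [FreeMagma.length]; have := t₁.length_pos; omega
    have e₂ : t₁.length + (t₂.length - 1) = (t₁ * t₂).length - 1 := by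
      simp only [FreeMagma.length]; have := t₂.length_pos; omega
    exact add_mem (e₁ ▸ h₁) (e₂ ▸ h₂)

theorem map_mem_homogeneous
    (hD : ∀ f g : FreeMagmaAlgebra1 K, D (f * g) = D f * g + f * D g) (hDx : D (genx K) = 1)
    {f : FreeMagmaAlgebra1 K} {n : ℕ} (hf : f ∈ homogeneous K (n + 1)) : D f ∈ homogeneous K n := by
  refine homogeneous_le_comap (p := homogeneous K n) (φ := D) (fun m hm => ?_) hf
  cases m with
  | one => exact absurd hm (by simp [degW])
  | coe t => simpa [← degW_coe, hm] using map_of_coe_mem_homogeneous hD hDx t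

theorem map_eq_zero_of_mem_homogeneous_zero
    (hD : ∀ f g : FreeMagmaAlgebra1 K, D (f * g) = D f * g + f * D g)
    {f : FreeMagmaAlgebra1 K} (hf : f ∈ homogeneous K 0) : D f = 0 := by
  refine homogeneous_le_comap (p := ⊥) (φ := D) (fun m hm => ?_) hf
  cases m with
  | one => rw [map_one, Submodule.mem_bot]; simpa using hD 1 1
  | coe t => exact absurd hm (degW_coe t ▸ t.length_pos.ne')

theorem _root_.IsHomog.pow_succ_apply_eq_zero
    (hD : ∀ f g : FreeMagmaAlgebra1 K, D (f * g) = D f * g + f * D g) (hDx : D (genx K) = 1)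
    {f : FreeMagmaAlgebra1 K} {n : ℕ} (hf : IsHomog f n) :
    ((D : Module.End K (FreeMagmaAlgebra1 K)) ^ (n + 1)) f = 0 := by
  rw [isHomog_iff_mem_homogeneous] at hf
  induction n generalizing f with
  | zero => rw [pow_one]; exact map_eq_zero_of_mem_homogeneous_zero hD hf
  | succ n ih =>
    rw [pow_succ, Module.End.mul_apply]
    exact ih (map_mem_homogeneous hD hDx hf)

end FreeMagmaAlgebra1

/-- For `f ∈ K{x}` homogeneous of degree `n`, the element
`g = Σ_{k=1}^{n+1} ((−1)^{k−1}/k!) L^k(D^{k−1} f)` satisfies `D(g) = f`. -/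
theorem integral_formula (K : Type*) [Field K] [CharZero K]
    (D : FreeMagmaAlgebra1 K →ₗ[K] FreeMagmaAlgebra1 K)
    (hD : ∀ f g : FreeMagmaAlgebra1 K, D (f * g) = D f * g + f * D g)
    (hDx : D (genx K) = 1)
    (n : ℕ) (f : FreeMagmaAlgebra1 K) (hf : IsHomog f n) :
    D (∑ k ∈ Finset.Icc 1 (n + 1),
        ((-1 : K) ^ (k - 1) / (k.factorial : K)) •
          (((LinearMap.mulLeft K (genx K) : Module.End K (FreeMagmaAlgebra1 K)) ^ k)
            (((D : Module.End K (FreeMagmaAlgebra1 K)) ^ (k - 1)) f))) = f := by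
  have hnil := hf.pow_succ_apply_eq_zero hD hDx
  have key := congrArg (· f) <| mul_sum_Icc_eq_one_sub_of_mul_sub_mul_eq_one K
    (mul_mulLeft_sub_mulLeft_mul_eq_one hD hDx) (n + 1)
  simpa [LinearMap.sum_apply, hnil] using key
end
end

section
/- Let M = M(x) be the free magma on one generator x, graded by degree (number of x's). Let Γ = M \ (xM ∪ {x}), a sub-magma of M, and let Ω = Γ \ (Γ·Γ) be the set of elements of Γ that are not products of two elements of Γ. Then Ω freely generates Γ as a magma, i.e. Γ is a free magma on the set Ω. -/
/-!
Γ is a submagma of the free magma `M(x)`, and every submagma `S` of a free magma is free on its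
indecomposables `S \ S·S`. Indeed, multiplication in a free magma is injective and never yields
a generator, so an element of `S` factors inside `S` in at most one way, namely into its two
top-level factors when both lie in `S`. Unfolding these factorizations writes every element of
`S` as a product of indecomposables (surjectivity), and uniqueness of the factorization makes that
expression unique (injectivity).
-/

namespace FreeMagma

variable {α : Type*}

theorem mul_eq_mul_iff {a b c d : FreeMagma α} : a * b = c * d ↔ a = c ∧ b = d :=
  ⟨fun h => by injection h with hac hbd; exact ⟨hac, hbd⟩,
    fun ⟨hac, hbd⟩ => hac ▸ hbd ▸ rfl⟩

theorem of_ne_mul (x : α) (a b : FreeMagma α) : of x ≠ a * b := nofun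

end FreeMagma

namespace Subsemigroup

variable {α : Type*} (S : Subsemigroup (FreeMagma α))

def indecomposables : Set (FreeMagma α) :=
  (S : Set (FreeMagma α)) \ {t | ∃ s ∈ S, ∃ u ∈ S, t = s * u}

def indecomposablesIncl : S.indecomposables → S := fun w => ⟨w.1, w.2.1⟩

variable {S}

theorem mul_notMem_indecomposables {a b : FreeMagma α} (ha : a ∈ S) (hb : b ∈ S) :
    a * b ∉ S.indecomposables :=
  fun h => h.2 ⟨a, ha, b, hb, rfl⟩

theorem mul_mem_indecomposables {a b : FreeMagma α} (hab : a * b ∈ S)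
    (hfactors : ¬(a ∈ S ∧ b ∈ S)) :
    a * b ∈ S.indecomposables := by
  refine ⟨hab, fun ⟨s, hs, u, hu, h⟩ => hfactors ?_⟩
  obtain ⟨rfl, rfl⟩ := FreeMagma.mul_eq_mul_iff.1 h
  exact ⟨hs, hu⟩

theorem of_mem_indecomposables {x : α} (hx : FreeMagma.of x ∈ S) :
    FreeMagma.of x ∈ S.indecomposables :=
  ⟨hx, fun ⟨s, _, u, _, h⟩ => FreeMagma.of_ne_mul x s u h⟩

theorem coe_lift_indecomposablesIncl_mul (w₁ w₂ : FreeMagma S.indecomposables) :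
    (FreeMagma.lift S.indecomposablesIncl (w₁ * w₂) : FreeMagma α) =
      FreeMagma.lift S.indecomposablesIncl w₁ * FreeMagma.lift S.indecomposablesIncl w₂ :=
  rfl

theorem surjective_lift_indecomposablesIncl :
    Function.Surjective (FreeMagma.lift S.indecomposablesIncl) := by
  rintro ⟨t, ht⟩
  induction t with
  | ih1 x => exact ⟨.of ⟨_, of_mem_indecomposables ht⟩, rfl⟩
  | ih2 a b iha ihb =>
    by_cases hfactors : a ∈ S ∧ b ∈ S
    · obtain ⟨w₁, hw₁⟩ := iha hfactors.1
      obtain ⟨w₂, hw₂⟩ := ihb hfactors.2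
      refine ⟨w₁ * w₂, Subtype.ext ?_⟩
      rw [coe_lift_indecomposablesIncl_mul, hw₁, hw₂]
    · exact ⟨.of ⟨_, mul_mem_indecomposables ht hfactors⟩, rfl⟩

theorem coe_lift_indecomposablesIncl_of_ne_mul (p : S.indecomposables)
    (w₁ w₂ : FreeMagma S.indecomposables) :
    (FreeMagma.lift S.indecomposablesIncl (.of p) : FreeMagma α) ≠
      FreeMagma.lift S.indecomposablesIncl (w₁ * w₂) := by
  intro h
  rw [coe_lift_indecomposablesIncl_mul] at h
  exact mul_notMem_indecomposables (Subtype.coe_prop _) (Subtype.coe_prop _) (h ▸ p.2)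

theorem injective_lift_indecomposablesIncl :
    Function.Injective (FreeMagma.lift S.indecomposablesIncl) := by
  intro w₁ w₂ h
  replace h := congrArg Subtype.val h
  induction w₁ generalizing w₂ with
  | ih1 p =>
    cases w₂ using FreeMagma.recOnMul with
    | ih1 q => exact congrArg _ (Subtype.ext h)
    | ih2 v₁ v₂ => exact absurd h (coe_lift_indecomposablesIncl_of_ne_mul p v₁ v₂)
  | ih2 u₁ u₂ ih₁ ih₂ =>
    cases w₂ using FreeMagma.recOnMul with
    | ih1 q => exact absurd h.symm (coe_lift_indecomposablesIncl_of_ne_mul q u₁ u₂)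
    | ih2 v₁ v₂ =>
      rw [coe_lift_indecomposablesIncl_mul, coe_lift_indecomposablesIncl_mul,
        FreeMagma.mul_eq_mul_iff] at h
      rw [ih₁ h.1, ih₂ h.2]

theorem bijective_lift_indecomposablesIncl :
    Function.Bijective (FreeMagma.lift S.indecomposablesIncl) :=
  ⟨injective_lift_indecomposablesIncl, surjective_lift_indecomposablesIncl⟩

end Subsemigroup

noncomputable section

namespace Stmt8

/-- The single generator `x` of the free magma `M(x)`. -/
def x1 : FreeMagma Unit := FreeMagma.of ()

/-- `Γ = M \ (xM ∪ {x})`, the set of monomials that are neither `x` nor of the form `x·t`. -/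
def Gam : Set (FreeMagma Unit) := {t | t ≠ x1 ∧ ∀ s, t ≠ x1 * s}

lemma mul_mem_Gam {a b : FreeMagma Unit} (ha : a ∈ Gam) (_hb : b ∈ Gam) :
    a * b ∈ Gam := by
  constructor
  · intro h
    exact FreeMagma.noConfusion rfl (heq_of_eq (show FreeMagma.mul a b = FreeMagma.of () from h))
  · intro s h
    have h' : FreeMagma.mul a b = FreeMagma.mul x1 s := h
    injection h' with h1 h2
    exact ha.1 h1

/-- `Γ` is a sub-magma: it is closed under the multiplication of `M(x)`. -/
instance : Mul Gam := ⟨fun a b => ⟨a.1 * b.1, mul_mem_Gam a.2 b.2⟩⟩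

/-- `Ω = Γ \ Γ·Γ`: the elements of `Γ` that are not products of two elements of `Γ`. -/
def Om : Set (FreeMagma Unit) :=
  Gam \ {t | ∃ s ∈ Gam, ∃ u ∈ Gam, t = s * u}

/-- The inclusion `Ω → Γ`. -/
def incl : Om → Gam := fun w => ⟨w.1, w.2.1⟩

def gamSubsemigroup : Subsemigroup (FreeMagma Unit) where
  carrier := Gam
  mul_mem' := mul_mem_Gam

-- `Om`, `incl` and the multiplication on `Gam` are definitionally those of `gamSubsemigroup`.
/-- `Ω` freely generates `Γ`: the canonical magma homomorphism from the
free magma on `Ω` to `Γ` is bijective. -/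
theorem Gamma_free_on_Omega : Function.Bijective ⇑(FreeMagma.lift incl) :=
  gamSubsemigroup.bijective_lift_indecomposablesIncl

end Stmt8
end
end

section
/- Let t be a monomial (planar binary tree with leaves labeled by X) in the free magma M(X), with leaf set I(t). For I ⊆ I(t), let t|I be the contraction of t to I (defined recursively by (t₁t₂)|I = (t₁|I∩I(t₁))·(t₂|I∩I(t₂)), with t|∅ = 1 the empty tree). Then the co-addition Δ on K{X} satisfies Δ(t) = Σ_{I ⊆ I(t)} (t|I) ⊗ (t|I^c), where I^c = I(t)\I. -/
open scoped TensorProduct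

noncomputable section

/-- The free unital magma algebra `K{X}`. -/
abbrev FreeMagmaAlgebra (K X : Type*) [Field K] : Type _ :=
  MonoidAlgebra K (WithOne (FreeMagma X))

/-- The generator of `K{X}` corresponding to a variable `x ∈ X`. -/
def FreeMagmaAlgebra.gen (K : Type*) {X : Type*} [Field K] (x : X) : FreeMagmaAlgebra K X :=
  MonoidAlgebra.of K (WithOne (FreeMagma X)) (FreeMagma.of x)

/-- The monomial of `K{X}` associated to an element of `M(X) ∪ {1}`. -/
def mono (K : Type*) {X : Type*} [Field K] (m : WithOne (FreeMagma X)) : FreeMagmaAlgebra K X :=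
  MonoidAlgebra.single m 1

open Classical in
/-- The contraction `t|I` of a tree `t` to a set `I` of its leaves, where leaves are numbered
from left to right starting at `0`; `(t₁t₂)|I = (t₁|I∩I(t₁))·(t₂|I∩I(t₂))` and a contraction
to the empty set gives the unit (empty tree). -/
def restrict {X : Type*} : FreeMagma X → Set ℕ → WithOne (FreeMagma X)
  | FreeMagma.of x, I => if 0 ∈ I then ((FreeMagma.of x : FreeMagma X) : WithOne (FreeMagma X)) else 1
  | FreeMagma.mul t₁ t₂, I => restrict t₁ I * restrict t₂ {n | n + t₁.length ∈ I}

lemma restrict_mul {X : Type*} (t₁ t₂ : FreeMagma X) (S : Set ℕ) :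
    restrict (t₁ * t₂) S = restrict t₁ S * restrict t₂ {n | n + t₁.length ∈ S} := rfl

lemma freeMagma_length_mul {X : Type*} (t₁ t₂ : FreeMagma X) :
    (t₁ * t₂).length = t₁.length + t₂.length := rfl

lemma mono_mul (K : Type*) {X : Type*} [Field K] (a b : WithOne (FreeMagma X)) :
    mono K (a * b) = mono K a * mono K b := by
  simp [mono, MonoidAlgebra.single_mul_single]

lemma restrict_congr {X : Type*} (t : FreeMagma X) (S S' : Set ℕ)
    (h : ∀ n < t.length, (n ∈ S ↔ n ∈ S')) : restrict t S = restrict t S' := by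
  induction t generalizing S S' with
  | ih1 x =>
    simp only [restrict]
    by_cases h0 : (0 : ℕ) ∈ S
    · rw [if_pos h0, if_pos ((h 0 Nat.one_pos).1 h0)]
    · rw [if_neg h0, if_neg (fun hc => h0 ((h 0 Nat.one_pos).2 hc))]
  | ih2 t₁ t₂ ih₁ ih₂ =>
    rw [restrict_mul, restrict_mul]
    congr 1
    · exact ih₁ S S' fun n hn => h n (by rw [freeMagma_length_mul]; omega)
    · exact ih₂ _ _ fun n hn => h (n + t₁.length) (by rw [freeMagma_length_mul]; omega)

lemma restrict_mul_union {X : Type*} (t₁ t₂ : FreeMagma X) (I₁ I₂ : Finset ℕ)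
    (h₁ : I₁ ⊆ Finset.range t₁.length) :
    restrict (t₁ * t₂) ↑(I₁ ∪ I₂.image (· + t₁.length)) =
      restrict t₁ ↑I₁ * restrict t₂ ↑I₂ := by
  rw [restrict_mul]
  congr 1
  · apply restrict_congr
    intro n hn
    simp only [Finset.coe_union, Set.mem_union, Finset.mem_coe, Finset.mem_image, Finset.coe_image,
      Set.mem_image]
    constructor
    · rintro (h | ⟨m, hm, rfl⟩)
      · exact h
      · omega
    · exact Or.inl
  · apply restrict_congr
    intro n hn
    simp only [Set.mem_setOf_eq, Finset.coe_union, Set.mem_union, Finset.mem_coe,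
      Finset.coe_image, Set.mem_image, Finset.mem_coe]
    constructor
    · rintro (h | ⟨m, hm, heq⟩)
      · have := h₁ h; simp only [Finset.mem_range] at this; omega
      · have : m = n := by omega
        exact this ▸ hm
    · intro h
      exact Or.inr ⟨n, h, rfl⟩

lemma compl_union_split (l₁ l₂ : ℕ) (I₁ I₂ : Finset ℕ) (h₁ : I₁ ⊆ Finset.range l₁)
    (h₂ : I₂ ⊆ Finset.range l₂) :
    Finset.range (l₁ + l₂) \ (I₁ ∪ I₂.image (· + l₁)) =
      (Finset.range l₁ \ I₁) ∪ (Finset.range l₂ \ I₂).image (· + l₁) := by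
  ext n
  simp only [Finset.mem_sdiff, Finset.mem_range, Finset.mem_union, Finset.mem_image,
    not_or, not_exists]
  constructor
  · rintro ⟨hn, hI₁, hI₂⟩
    rcases lt_or_ge n l₁ with hl | hl
    · exact Or.inl ⟨hl, hI₁⟩
    · refine Or.inr ⟨n - l₁, ⟨by omega, fun hm => ?_⟩, by omega⟩
      have := hI₂ (n - l₁)
      simp only [not_and] at this
      exact this hm (by omega)
  · rintro (⟨hn, hI⟩ | ⟨m, ⟨hm, hmI⟩, rfl⟩)
    · refine ⟨by omega, hI, fun m => ?_⟩
      rintro ⟨hm, heq⟩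
      have := h₂ hm; simp only [Finset.mem_range] at this; omega
    · refine ⟨by omega, fun h => ?_, fun m' => ?_⟩
      · have := h₁ h; simp only [Finset.mem_range] at this; omega
      · rintro ⟨hm', heq⟩
        have : m' = m := by omega
        exact hmI (this ▸ hm')

/-- For a monomial `t ∈ M(X)` with leaf set `I(t)` (numbered `0,…,deg t −1`),
the co-addition satisfies `Δ(t) = Σ_{I ⊆ I(t)} (t|I) ⊗ (t|Iᶜ)`. -/
theorem coaddition_contraction (K X : Type*) [Field K] [CharZero K]
    (Δ : FreeMagmaAlgebra K X →ₗ[K] FreeMagmaAlgebra K X ⊗[K] FreeMagmaAlgebra K X)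
    (hmul : ∀ f g : FreeMagmaAlgebra K X, Δ (f * g) = Δ f * Δ g)
    (hone : Δ 1 = 1 ⊗ₜ 1)
    (hgen : ∀ x : X, Δ (FreeMagmaAlgebra.gen K x) =
      FreeMagmaAlgebra.gen K x ⊗ₜ 1 + 1 ⊗ₜ FreeMagmaAlgebra.gen K x) :
    ∀ t : FreeMagma X,
      Δ (mono K (t : WithOne (FreeMagma X))) =
        ∑ I ∈ (Finset.range t.length).powerset,
          mono K (restrict t ↑I) ⊗ₜ mono K (restrict t ↑(Finset.range t.length \ I)) := by
  intro t
  induction t with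
  | ih1 x =>
    have hlen : (FreeMagma.of x : FreeMagma X).length = 1 := rfl
    have hmono : mono K ((FreeMagma.of x : FreeMagma X) : WithOne (FreeMagma X)) =
        FreeMagmaAlgebra.gen K x := rfl
    have h0 : restrict (FreeMagma.of x) (↑(∅ : Finset ℕ)) = 1 := by
      simp [restrict]
    have h1 : restrict (FreeMagma.of x) (↑({0} : Finset ℕ)) =
        ((FreeMagma.of x : FreeMagma X) : WithOne (FreeMagma X)) := by
      simp [restrict]
    rw [hmono, hgen, hlen, Finset.range_one,
      show ({0} : Finset ℕ).powerset = {∅, {0}} by decide]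
    rw [show ({∅, {0}} : Finset (Finset ℕ)) = insert ∅ {({0} : Finset ℕ)} from rfl,
      Finset.sum_insert (by decide), Finset.sum_singleton]
    simp only [Finset.sdiff_empty, Finset.sdiff_self, h0, h1]
    rw [show mono K (1 : WithOne (FreeMagma X)) = 1 from rfl, hmono]
    exact add_comm _ _
  | ih2 t₁ t₂ ih₁ ih₂ =>
    have hlen : (t₁ * t₂).length = t₁.length + t₂.length := rfl
    set l₁ := t₁.length
    set l₂ := t₂.length
    have hcoe : ((t₁ * t₂ : FreeMagma X) : WithOne (FreeMagma X)) =
        (↑t₁ : WithOne (FreeMagma X)) * ↑t₂ := rfl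
    rw [hcoe, mono_mul, hmul, ih₁, ih₂, Finset.sum_mul_sum]
    rw [← Finset.sum_product']
    rw [hlen]
    refine Finset.sum_nbij' (fun p => p.1 ∪ p.2.image (· + l₁))
      (fun I => (I ∩ Finset.range l₁, (I.filter (l₁ ≤ ·)).image (· - l₁))) ?_ ?_ ?_ ?_ ?_
    · rintro ⟨I₁, I₂⟩ hp
      simp only [Finset.mem_product, Finset.mem_powerset] at hp
      simp only [Finset.mem_powerset]
      intro n hn
      simp only [Finset.mem_union, Finset.mem_image] at hn
      rcases hn with h | ⟨m, hm, rfl⟩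
      · have := hp.1 h; simp only [Finset.mem_range] at this ⊢; omega
      · have := hp.2 hm; simp only [Finset.mem_range] at this ⊢; omega
    · intro I hI
      simp only [Finset.mem_powerset] at hI
      simp only [Finset.mem_product, Finset.mem_powerset]
      constructor
      · exact Finset.inter_subset_right
      · intro n hn
        simp only [Finset.mem_image, Finset.mem_filter] at hn
        obtain ⟨m, ⟨hm, hle⟩, rfl⟩ := hn
        have := hI hm; simp only [Finset.mem_range] at this ⊢; omega
    · rintro ⟨I₁, I₂⟩ hp
      simp only [Finset.mem_product, Finset.mem_powerset] at hp
      obtain ⟨hp₁, hp₂⟩ := hp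
      ext n
      · simp only [Finset.mem_inter, Finset.mem_union, Finset.mem_image, Finset.mem_range]
        constructor
        · rintro ⟨h | ⟨m, hm, rfl⟩, hn⟩
          · exact h
          · omega
        · intro h
          have := hp₁ h; simp only [Finset.mem_range] at this
          exact ⟨Or.inl h, this⟩
      · simp only [Finset.mem_image, Finset.mem_filter, Finset.mem_union]
        constructor
        · rintro ⟨m, ⟨h | ⟨k, hk, rfl⟩, hle⟩, rfl⟩
          · have := hp₁ h; simp only [Finset.mem_range] at this; omega
          · have : k + l₁ - l₁ = k := by omega
            rwa [this]
        · intro h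
          exact ⟨n + l₁, ⟨Or.inr ⟨n, h, rfl⟩, by omega⟩, by omega⟩
    · intro I hI
      simp only [Finset.mem_powerset] at hI
      ext n
      simp only [Finset.mem_union, Finset.mem_inter, Finset.mem_image, Finset.mem_filter,
        Finset.mem_range]
      constructor
      · rintro (⟨h, _⟩ | ⟨m, ⟨k, ⟨hk, hle⟩, rfl⟩, rfl⟩)
        · exact h
        · have : k - l₁ + l₁ = k := by omega
          rwa [this]
      · intro h
        rcases lt_or_ge n l₁ with hl | hl
        · exact Or.inl ⟨h, hl⟩
        · exact Or.inr ⟨n - l₁, ⟨n, ⟨h, hl⟩, rfl⟩, by omega⟩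
    · rintro ⟨I₁, I₂⟩ hp
      simp only [Finset.mem_product, Finset.mem_powerset] at hp
      obtain ⟨hp₁, hp₂⟩ := hp
      rw [Algebra.TensorProduct.tmul_mul_tmul, ← mono_mul, ← mono_mul,
        ← restrict_mul_union t₁ t₂ I₁ I₂ hp₁,
        ← restrict_mul_union t₁ t₂ _ _ Finset.sdiff_subset,
        ← compl_union_split l₁ l₂ I₁ I₂ hp₁ hp₂]
end
end

section
/- Let K{X} be the free magma algebra with co-addition Δ, and for a monomial s ∈ M(X) let Δ_s: K{X} → K{X} be the linear map defined by Δ(f) = Σ_s Δ_s(f) ⊗ s (sum over all monomials s, including s = 1). Then Δ_{x_i} = D_i, the unique derivation of K{X} with D_i(x_i) = 1 and D_i(x_j) = 0 for j ≠ i. -/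
open scoped TensorProduct

noncomputable section

/-- `Δ_s`: the coefficient of the monomial `s` in the second tensor slot of `Δ(f)`,
so that `Δ(f) = Σ_s Δ_s(f) ⊗ s`. -/
def DeltaS {K X : Type*} [Field K]
    (Δ : FreeMagmaAlgebra K X →ₗ[K] FreeMagmaAlgebra K X ⊗[K] FreeMagmaAlgebra K X)
    (s : WithOne (FreeMagma X)) : FreeMagmaAlgebra K X →ₗ[K] FreeMagmaAlgebra K X :=
  (TensorProduct.rid K (FreeMagmaAlgebra K X)).toLinearMap ∘ₗ
    TensorProduct.map LinearMap.id
      (Finsupp.lapply s ∘ₗ (MonoidAlgebra.coeffLinearEquiv K).toLinearMap) ∘ₗ Δ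

/-!
Extracting the coefficient of a monomial `s` from the second tensor factor is compatible with
products as soon as `s` has few factorisations among the monomials: the only factorisation of
`1` is `1 * 1`, and those of a letter `x_i` are `x_i * 1` and `1 * x_i`. Applied to the
multiplicative map `Δ`, this makes `Δ_1` multiplicative and gives
`Δ_{x_i}(fg) = Δ_{x_i}(f) Δ_1(g) + Δ_1(f) Δ_{x_i}(g)`. Since `Δ_1` fixes `1` and the
generators, it is the identity, so `Δ_{x_i}` is a derivation; it agrees with `D_i` on the
generators, and a derivation of `K{X}` is determined by its values there.
-/

namespace MonoidAlgebra

variable {K M A : Type*} [CommSemiring K]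

section Coeff
variable [MulOneClass M]

theorem coeff_mul_one_of_mul_eq_one (h : ∀ s t : M, s * t = 1 → s = 1 ∧ t = 1)
    (x y : MonoidAlgebra K M) : (x * y).coeff 1 = x.coeff 1 * y.coeff 1 := by
  classical
  rw [coeff_mul_antidiag x y 1 {(1, 1)}, Finset.sum_singleton]
  rintro ⟨s, t⟩
  simp only [Finset.mem_singleton, Prod.mk.injEq]
  exact ⟨fun ⟨hs, ht⟩ => by rw [hs, ht, one_mul], h s t⟩

theorem coeff_mul_of_mul_eq_imp {a : M} (ha : a ≠ 1)
    (h : ∀ s t : M, s * t = a → s = a ∧ t = 1 ∨ s = 1 ∧ t = a) (x y : MonoidAlgebra K M) :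
    (x * y).coeff a = x.coeff a * y.coeff 1 + x.coeff 1 * y.coeff a := by
  classical
  have hne : (a, (1 : M)) ≠ (1, a) := fun hp => ha (Prod.mk.inj hp).1
  rw [coeff_mul_antidiag x y a {(a, 1), (1, a)}, Finset.sum_pair hne]
  rintro ⟨s, t⟩
  simp only [Finset.mem_insert, Finset.mem_singleton, Prod.mk.injEq]
  refine ⟨?_, h s t⟩
  rintro (⟨rfl, rfl⟩ | ⟨rfl, rfl⟩) <;> simp

end Coeff

section CoeffRight
variable (K A) [AddCommMonoid A] [Module K A]

def coeffRight (s : M) : A ⊗[K] MonoidAlgebra K M →ₗ[K] A :=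
  (TensorProduct.rid K A).toLinearMap ∘ₗ
    TensorProduct.map LinearMap.id (Finsupp.lapply s ∘ₗ (coeffLinearEquiv K).toLinearMap)

variable {K A}

@[simp]
theorem coeffRight_tmul (s : M) (a : A) (x : MonoidAlgebra K M) :
    coeffRight K A s (a ⊗ₜ x) = x.coeff s • a := by
  simp [coeffRight]

end CoeffRight

variable [MulOneClass M] [NonUnitalNonAssocSemiring A] [Module K A] [SMulCommClass K A A]
  [IsScalarTower K A A]

theorem coeffRight_one_mul (h : ∀ s t : M, s * t = 1 → s = 1 ∧ t = 1)
    (u v : A ⊗[K] MonoidAlgebra K M) :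
    coeffRight K A 1 (u * v) = coeffRight K A 1 u * coeffRight K A 1 v := by
  induction u using TensorProduct.induction_on with
  | zero => simp
  | add u₁ u₂ h₁ h₂ => rw [add_mul, map_add, h₁, h₂, map_add, add_mul]
  | tmul a x =>
    induction v using TensorProduct.induction_on with
    | zero => simp
    | add v₁ v₂ h₁ h₂ => rw [mul_add, map_add, h₁, h₂, map_add, mul_add]
    | tmul b y =>
      rw [Algebra.TensorProduct.tmul_mul_tmul, coeffRight_tmul, coeffRight_tmul, coeffRight_tmul,
        coeff_mul_one_of_mul_eq_one h, smul_mul_smul_comm]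

theorem coeffRight_mul_of_mul_eq_imp {a : M} (ha : a ≠ 1)
    (h : ∀ s t : M, s * t = a → s = a ∧ t = 1 ∨ s = 1 ∧ t = a)
    (u v : A ⊗[K] MonoidAlgebra K M) :
    coeffRight K A a (u * v) =
      coeffRight K A a u * coeffRight K A 1 v + coeffRight K A 1 u * coeffRight K A a v := by
  induction u using TensorProduct.induction_on with
  | zero => simp
  | add u₁ u₂ h₁ h₂ =>
    rw [add_mul, map_add, h₁, h₂, map_add, map_add, add_mul, add_mul, add_add_add_comm]
  | tmul b x =>
    induction v using TensorProduct.induction_on with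
    | zero => simp
    | add v₁ v₂ h₁ h₂ =>
      rw [mul_add, map_add, h₁, h₂, map_add, map_add, mul_add, mul_add, add_add_add_comm]
    | tmul c y =>
      simp only [Algebra.TensorProduct.tmul_mul_tmul, coeffRight_tmul,
        coeff_mul_of_mul_eq_imp ha h, add_smul, smul_mul_smul_comm]

end MonoidAlgebra

namespace WithOne

variable {α : Type*} [Mul α]

theorem eq_one_and_eq_one_of_mul_eq_one {s t : WithOne α} (h : s * t = 1) : s = 1 ∧ t = 1 := by
  revert h
  induction s using WithOne.cases_on <;> induction t using WithOne.cases_on <;> simp [← coe_mul]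

end WithOne

theorem FreeMagma.withOne_mul_eq_of {X : Type*} {x : X} {s t : WithOne (FreeMagma X)}
    (h : s * t = (FreeMagma.of x : WithOne (FreeMagma X))) :
    s = (FreeMagma.of x : WithOne (FreeMagma X)) ∧ t = 1 ∨
      s = 1 ∧ t = (FreeMagma.of x : WithOne (FreeMagma X)) := by
  revert h
  induction s using WithOne.cases_on <;> induction t using WithOne.cases_on <;>
    simp [← WithOne.coe_mul]

namespace FreeMagmaAlgebra

variable {K X : Type*} [Field K]

theorem coeff_gen (x : X) : (gen K x).coeff (FreeMagma.of x : WithOne (FreeMagma X)) = 1 :=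
  Finsupp.single_eq_same

theorem coeff_gen_of_ne {x y : X} (h : x ≠ y) :
    (gen K x).coeff (FreeMagma.of y : WithOne (FreeMagma X)) = 0 :=
  Finsupp.single_eq_of_ne' fun hxy => h (by injection WithOne.coe_inj.mp hxy)

theorem coeff_gen_one (x : X) : (gen K x).coeff 1 = 0 :=
  Finsupp.single_eq_of_ne' WithOne.coe_ne_one

theorem coeff_one_of (x : X) :
    (1 : FreeMagmaAlgebra K X).coeff (FreeMagma.of x : WithOne (FreeMagma X)) = 0 :=
  Finsupp.single_eq_of_ne' WithOne.one_ne_coe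

theorem induction_on {p : FreeMagmaAlgebra K X → Prop} (f : FreeMagmaAlgebra K X) (one : p 1)
    (gen : ∀ x, p (gen K x)) (add : ∀ f g, p f → p g → p (f + g))
    (smul : ∀ (c : K) f, p f → p (c • f)) (mul : ∀ f g, p f → p g → p (f * g)) :
    p f := by
  have single_one : ∀ m, p (MonoidAlgebra.single m 1) := by
    intro m
    induction m using WithOne.recOneCoe with
    | one => exact one
    | coe w =>
      induction w using FreeMagma.recOnMul with
      | ih1 x => exact gen x
      | ih2 a b ha hb =>
        rw [WithOne.coe_mul, ← one_mul (1 : K), ← MonoidAlgebra.single_mul_single]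
        exact mul _ _ ha hb
  induction f using MonoidAlgebra.induction_linear with
  | zero => simpa using smul 0 1 one
  | add f g hf hg => exact add f g hf hg
  | single m c => simpa using smul c _ (single_one m)

theorem linearMap_eq_id {φ : FreeMagmaAlgebra K X →ₗ[K] FreeMagmaAlgebra K X}
    (map_mul : ∀ f g, φ (f * g) = φ f * φ g) (map_one : φ 1 = 1)
    (map_gen : ∀ x, φ (gen K x) = gen K x) : φ = LinearMap.id := by
  refine LinearMap.ext fun f => ?_
  induction f using induction_on with
  | one => exact map_one
  | gen x => exact map_gen x
  | add f g hf hg => simp only [map_add, hf, hg, LinearMap.id_apply]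
  | smul c f hf => simp only [map_smul, hf, LinearMap.id_apply]
  | mul f g hf hg => simp only [map_mul, hf, hg, LinearMap.id_apply]

theorem map_one_eq_zero_of_leibniz {D : FreeMagmaAlgebra K X →ₗ[K] FreeMagmaAlgebra K X}
    (hD : ∀ f g, D (f * g) = D f * g + f * D g) : D 1 = 0 := by
  simpa using hD 1 1

theorem linearMap_ext_of_leibniz {D₁ D₂ : FreeMagmaAlgebra K X →ₗ[K] FreeMagmaAlgebra K X}
    (hD₁ : ∀ f g, D₁ (f * g) = D₁ f * g + f * D₁ g)
    (hD₂ : ∀ f g, D₂ (f * g) = D₂ f * g + f * D₂ g)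
    (h : ∀ x, D₁ (gen K x) = D₂ (gen K x)) : D₁ = D₂ := by
  refine LinearMap.ext fun f => ?_
  induction f using induction_on with
  | one => rw [map_one_eq_zero_of_leibniz hD₁, map_one_eq_zero_of_leibniz hD₂]
  | gen x => exact h x
  | add f g hf hg => rw [map_add, map_add, hf, hg]
  | smul c f hf => rw [map_smul, map_smul, hf]
  | mul f g hf hg => rw [hD₁, hD₂, hf, hg]

end FreeMagmaAlgebra

namespace DeltaS

open FreeMagmaAlgebra MonoidAlgebra

variable {K X : Type*} [Field K]
  {Δ : FreeMagmaAlgebra K X →ₗ[K] FreeMagmaAlgebra K X ⊗[K] FreeMagmaAlgebra K X}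

theorem apply_eq_coeffRight (s : WithOne (FreeMagma X)) (f : FreeMagmaAlgebra K X) :
    DeltaS Δ s f = coeffRight K (FreeMagmaAlgebra K X) s (Δ f) := rfl

theorem apply_gen
    (hgen : ∀ x : X, Δ (gen K x) = gen K x ⊗ₜ 1 + 1 ⊗ₜ gen K x) (x y : X) :
    DeltaS Δ (FreeMagma.of y : WithOne (FreeMagma X)) (gen K x) =
      (gen K x).coeff (FreeMagma.of y : WithOne (FreeMagma X)) • 1 := by
  rw [apply_eq_coeffRight, hgen, map_add, coeffRight_tmul, coeffRight_tmul, coeff_one_of,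
    zero_smul, zero_add]

variable (hmul : ∀ f g : FreeMagmaAlgebra K X, Δ (f * g) = Δ f * Δ g)
  (hgen : ∀ x : X, Δ (gen K x) = gen K x ⊗ₜ 1 + 1 ⊗ₜ gen K x)
include hmul hgen

theorem one_eq_id (hone : Δ 1 = 1 ⊗ₜ 1) : DeltaS Δ 1 = LinearMap.id := by
  refine linearMap_eq_id (fun f g => ?_) ?_ fun x => ?_
  · change coeffRight K _ 1 (Δ (f * g)) = coeffRight K _ 1 (Δ f) * coeffRight K _ 1 (Δ g)
    rw [hmul, coeffRight_one_mul fun _ _ => WithOne.eq_one_and_eq_one_of_mul_eq_one]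
  · rw [apply_eq_coeffRight, hone, coeffRight_tmul, coeff_one_one, one_smul]
  · rw [apply_eq_coeffRight, hgen, map_add, coeffRight_tmul, coeffRight_tmul, coeff_one_one,
      one_smul, coeff_gen_one, zero_smul, add_zero]

theorem leibniz (hone : Δ 1 = 1 ⊗ₜ 1) (i : X) (f g : FreeMagmaAlgebra K X) :
    DeltaS Δ (FreeMagma.of i : WithOne (FreeMagma X)) (f * g) =
      DeltaS Δ (FreeMagma.of i : WithOne (FreeMagma X)) f * g +
        f * DeltaS Δ (FreeMagma.of i : WithOne (FreeMagma X)) g := by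
  rw [apply_eq_coeffRight, hmul, coeffRight_mul_of_mul_eq_imp WithOne.coe_ne_one
    fun _ _ => FreeMagma.withOne_mul_eq_of]
  simp only [← apply_eq_coeffRight, one_eq_id hmul hgen hone, LinearMap.id_apply]

end DeltaS

theorem DeltaS_var_eq_derivation_general (K X : Type*) [Field K]
    (Δ : FreeMagmaAlgebra K X →ₗ[K] FreeMagmaAlgebra K X ⊗[K] FreeMagmaAlgebra K X)
    (hmul : ∀ f g : FreeMagmaAlgebra K X, Δ (f * g) = Δ f * Δ g)
    (hone : Δ 1 = 1 ⊗ₜ 1)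
    (hgen : ∀ x : X, Δ (FreeMagmaAlgebra.gen K x) =
      FreeMagmaAlgebra.gen K x ⊗ₜ 1 + 1 ⊗ₜ FreeMagmaAlgebra.gen K x)
    (i : X)
    (D : FreeMagmaAlgebra K X →ₗ[K] FreeMagmaAlgebra K X)
    (hD : ∀ f g : FreeMagmaAlgebra K X, D (f * g) = D f * g + f * D g)
    (hDi : D (FreeMagmaAlgebra.gen K i) = 1)
    (hDj : ∀ j : X, j ≠ i → D (FreeMagmaAlgebra.gen K j) = 0) :
    DeltaS Δ ((FreeMagma.of i : FreeMagma X) : WithOne (FreeMagma X)) = D := by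
  refine FreeMagmaAlgebra.linearMap_ext_of_leibniz (DeltaS.leibniz hmul hgen hone i) hD
    fun j => ?_
  rw [DeltaS.apply_gen hgen]
  rcases eq_or_ne j i with rfl | hji
  · rw [FreeMagmaAlgebra.coeff_gen, one_smul, hDi]
  · rw [FreeMagmaAlgebra.coeff_gen_of_ne hji, zero_smul, hDj j hji]

/-- `Δ_{x_i} = D_i`, the unique derivation of `K{X}` with
`D_i(x_i) = 1` and `D_i(x_j) = 0` for `j ≠ i`. -/
theorem DeltaS_var_eq_derivation (K X : Type*) [Field K] [CharZero K] [DecidableEq X]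
    (Δ : FreeMagmaAlgebra K X →ₗ[K] FreeMagmaAlgebra K X ⊗[K] FreeMagmaAlgebra K X)
    (hmul : ∀ f g : FreeMagmaAlgebra K X, Δ (f * g) = Δ f * Δ g)
    (hone : Δ 1 = 1 ⊗ₜ 1)
    (hgen : ∀ x : X, Δ (FreeMagmaAlgebra.gen K x) =
      FreeMagmaAlgebra.gen K x ⊗ₜ 1 + 1 ⊗ₜ FreeMagmaAlgebra.gen K x)
    (i : X)
    (D : FreeMagmaAlgebra K X →ₗ[K] FreeMagmaAlgebra K X)
    (hD : ∀ f g : FreeMagmaAlgebra K X, D (f * g) = D f * g + f * D g)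
    (hDi : D (FreeMagmaAlgebra.gen K i) = 1)
    (hDj : ∀ j : X, j ≠ i → D (FreeMagmaAlgebra.gen K j) = 0) :
    DeltaS Δ ((FreeMagma.of i : FreeMagma X) : WithOne (FreeMagma X)) = D :=
  DeltaS_var_eq_derivation_general K X Δ hmul hone hgen i D hD hDi hDj
end
end

section
/- Let K{X} be the free magma algebra over a field of characteristic 0, Δ the co-addition, and for monomials s define Δ_s by Δ(f) = Σ_s Δ_s(f) ⊗ s. For any fixed variable x_i ∈ X and any n ≥ 1, the sum of Δ_s over all monomials s of degree n in the single variable x_i equals (1/n!)·D_i^n, where D_i is the derivation with D_i(x_i) = 1, D_i(x_j) = 0 (j≠i). -/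
open scoped TensorProduct

noncomputable section

/-! Sending `x_i` to `t` and every other variable to `0` is a magma homomorphism `K{X} → K[t]`,
and the coefficient of `t^n` in the image of `g` is the sum of the coefficients of `g` at the
`x_i`-monomials of degree `n`. Applied in the right tensor factor of `Δ f`, this turns
`L_n = Σ_{|s| = n} Δ_s` into a family satisfying the higher Leibniz rule
`L_n (f g) = Σ_{p + q = n} L_p f · L_q g`, because `Δ` is multiplicative. By the general Leibniz
rule, `D^n / n!` satisfies the same rule. Since `K{X}` is spanned by products of generators,
such a family is determined by its values on `1` and on the generators, where the two families
agree. -/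

open Finset

namespace FreeMagma

variable {α β : Type*}

theorem map_injective {f : α → β} (hf : Function.Injective f) :
    Function.Injective (map f) := by
  intro x
  induction x with
  | ih1 a =>
    rintro (b | ⟨y, z⟩) h
    · injection h with h
      rw [hf h]
    · cases h
  | ih2 x y hx hy =>
    rintro (b | ⟨x', y'⟩) h
    · cases h
    · injection h with h₁ h₂
      rw [hx h₁, hy h₂]
      rfl

theorem of_mem_range_map_iff {f : α → β} {b : β} :
    of b ∈ Set.range (map f) ↔ b ∈ Set.range f := by
  constructor
  · rintro ⟨a | ⟨x, y⟩, h⟩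
    · injection h with h
      exact ⟨a, h⟩
    · cases h
  · rintro ⟨a, rfl⟩
    exact ⟨of a, rfl⟩

theorem mul_mem_range_map_iff {f : α → β} {x y : FreeMagma β} :
    x * y ∈ Set.range (map f) ↔ x ∈ Set.range (map f) ∧ y ∈ Set.range (map f) := by
  constructor
  · rintro ⟨a | ⟨a, b⟩, h⟩
    · cases h
    · injection h with h₁ h₂
      subst h₁ h₂
      exact ⟨⟨a, rfl⟩, ⟨b, rfl⟩⟩
  · rintro ⟨⟨a, rfl⟩, ⟨b, rfl⟩⟩
    exact ⟨a * b, map_mul _ a b⟩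

theorem lift_map_const {M : Type*} [Monoid M] (f : β → M) (b : β) (s : FreeMagma α) :
    lift f (map (fun _ => b) s) = f b ^ s.length := by
  induction s with
  | ih1 a => simp
  | ih2 x y hx hy => simp [hx, hy, pow_add]

theorem lift_eq_zero_of_notMem_range_map_const {M : Type*} [MonoidWithZero M] {f : β → M}
    {b : β} (hf : ∀ c, c ≠ b → f c = 0) {x : FreeMagma β}
    (hx : x ∉ Set.range (map fun _ : Unit => b)) : lift f x = 0 := by
  induction x with
  | ih1 c => exact hf c fun h => hx (of_mem_range_map_iff.2 ⟨(), h.symm⟩)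
  | ih2 x y ihx ihy =>
    rw [mul_mem_range_map_iff, not_and_or] at hx
    rcases hx with hx | hy
    · simp [ihx hx]
    · simp [ihy hy]

theorem finite_setOf_length_le [Finite α] (n : ℕ) :
    {x : FreeMagma α | x.length ≤ n}.Finite := by
  induction n with
  | zero => simp [(length_pos _).ne']
  | succ n ih =>
    refine ((Set.finite_range of).union (ih.image2 (· * ·) ih)).subset ?_
    rintro (a | ⟨x, y⟩) h
    · exact .inl ⟨a, rfl⟩
    · have := x.length_pos
      have := y.length_pos
      change x.length + y.length ≤ n + 1 at h
      exact .inr ⟨x, by simp only [Set.mem_ofPred_eq]; omega,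
        y, by simp only [Set.mem_ofPred_eq]; omega, rfl⟩

theorem finite_setOf_length_eq [Finite α] (n : ℕ) :
    {x : FreeMagma α | x.length = n}.Finite :=
  (finite_setOf_length_le n).subset fun _ h => le_of_eq h

end FreeMagma

def HigherLeibniz {R A B : Type*} [Semiring R] [NonUnitalNonAssocSemiring A] [Module R A]
    [NonUnitalNonAssocSemiring B] [Module R B] (F : ℕ → A →ₗ[R] B) : Prop :=
  ∀ n f g, F n (f * g) = ∑ pq ∈ antidiagonal n, F pq.1 f * F pq.2 g

theorem iterate_map_mul_eq_sum_choose {A F : Type*} [NonUnitalNonAssocSemiring A]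
    [FunLike F A A] [AddMonoidHomClass F A A] (D : F)
    (hD : ∀ f g, D (f * g) = D f * g + f * D g) (n : ℕ) (f g : A) :
    D^[n] (f * g) = ∑ ij ∈ antidiagonal n, n.choose ij.1 • (D^[ij.1] f * D^[ij.2] g) := by
  induction n with
  | zero => simp
  | succ n ih =>
    rw [sum_antidiagonal_choose_succ_nsmul (M := A) (fun i j => D^[i] f * D^[j] g) n]
    simp only [Function.iterate_succ_apply', ih, map_sum, map_nsmul, hD, smul_add,
      sum_add_distrib]
    rw [add_comm]
    congr 1
    refine sum_congr rfl fun ⟨i, j⟩ hij => ?_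
    rw [n.choose_symm_of_eq_add (mem_antidiagonal.1 hij).symm]

section IteratedLeibniz

variable {K A : Type*} [Field K]

theorem higherLeibniz_inv_factorial_smul_pow [CharZero K] [NonUnitalNonAssocSemiring A]
    [Module K A] [IsScalarTower K A A] [SMulCommClass K A A] {D : Module.End K A}
    (hD : ∀ f g, D (f * g) = D f * g + f * D g) :
    HigherLeibniz fun n => (n.factorial : K)⁻¹ • D ^ n := by
  intro n f g
  simp only [LinearMap.smul_apply, Module.End.pow_apply]
  rw [iterate_map_mul_eq_sum_choose D hD, smul_sum]
  refine sum_congr rfl fun ⟨p, q⟩ hpq => ?_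
  obtain rfl := mem_antidiagonal.1 hpq
  rw [smul_mul_smul_comm, ← Nat.cast_smul_eq_nsmul K, smul_smul, Nat.cast_add_choose]
  congr 1
  have := (p + q).factorial_ne_zero
  field_simp

variable [NonAssocRing A] [Module K A] {D : Module.End K A} (hD : ∀ f g, D (f * g) = D f * g + f * D g)
include hD

theorem map_one_eq_zero_of_leibniz : D 1 = 0 := by
  have h := hD 1 1
  simp only [one_mul, mul_one] at h
  exact left_eq_add.1 h

theorem inv_factorial_smul_pow_apply_one (n : ℕ) :
    ((n.factorial : K)⁻¹ • D ^ n) 1 = if n = 0 then 1 else 0 := by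
  rcases n with _ | n
  · simp
  · simp [pow_succ, map_one_eq_zero_of_leibniz hD]

theorem inv_factorial_smul_pow_apply_of_map_eq_smul_one {a : A} {c : K} (ha : D a = c • 1)
    (n : ℕ) :
    ((n.factorial : K)⁻¹ • D ^ n) a = if n = 0 then a else if n = 1 then c • 1 else 0 := by
  rcases n with _ | _ | n
  · simp
  · simp [ha]
  · simp [pow_succ, ha, map_one_eq_zero_of_leibniz hD]

end IteratedLeibniz

namespace TensorProduct

section

variable {R A B : Type*} [CommSemiring R] [AddCommMonoid A] [Module R A] [AddCommMonoid B]
  [Module R B]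

def evalRight (φ : B →ₗ[R] R) : A ⊗[R] B →ₗ[R] A :=
  (TensorProduct.rid R A).toLinearMap ∘ₗ LinearMap.lTensor A φ

@[simp] theorem evalRight_tmul (φ : B →ₗ[R] R) (a : A) (b : B) :
    evalRight φ (a ⊗ₜ b) = φ b • a := by
  simp [evalRight]

theorem sum_evalRight {ι : Type*} (s : Finset ι) (φ : ι → B →ₗ[R] R) :
    ∑ k ∈ s, evalRight (A := A) (φ k) = evalRight (∑ k ∈ s, φ k) := by
  ext a b
  simp [sum_smul]

end

theorem higherLeibniz_evalRight {R A B : Type*} [CommSemiring R]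
    [NonUnitalNonAssocSemiring A] [Module R A] [SMulCommClass R A A] [IsScalarTower R A A]
    [NonUnitalNonAssocSemiring B] [Module R B] [SMulCommClass R B B] [IsScalarTower R B B]
    {φ : ℕ → B →ₗ[R] R} (hφ : HigherLeibniz φ) :
    HigherLeibniz fun n => evalRight (A := A) (φ n) := by
  intro n x y
  induction x using TensorProduct.induction_on with
  | zero => simp
  | add x x' hx hx' => simp [add_mul, hx, hx', sum_add_distrib]
  | tmul a b =>
    induction y using TensorProduct.induction_on with
    | zero => simp
    | add y y' hy hy' => simp [mul_add, hy, hy', sum_add_distrib]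
    | tmul c d =>
      simp only [Algebra.TensorProduct.tmul_mul_tmul, evalRight_tmul]
      rw [hφ n, sum_smul]
      exact sum_congr rfl fun pq _ => (smul_mul_smul_comm _ _ _ _).symm

end TensorProduct

namespace FreeMagmaAlgebra

open TensorProduct

variable {K X : Type*} [Field K]

theorem single_coe_mul (a b : FreeMagma X) :
    (MonoidAlgebra.single ((a * b : FreeMagma X) : WithOne (FreeMagma X)) 1 : FreeMagmaAlgebra K X)
      = MonoidAlgebra.single (a : WithOne (FreeMagma X)) 1
        * MonoidAlgebra.single (b : WithOne (FreeMagma X)) 1 := by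
  rw [MonoidAlgebra.single_mul_single, one_mul, WithOne.coe_mul]

theorem ext_of_higherLeibniz {B : Type*} [NonUnitalNonAssocSemiring B] [Module K B]
    {F G : ℕ → FreeMagmaAlgebra K X →ₗ[K] B} (hF : HigherLeibniz F) (hG : HigherLeibniz G)
    (h_one : ∀ n, F n 1 = G n 1) (h_gen : ∀ n x, F n (gen K x) = G n (gen K x)) : F = G := by
  have h_coe (w : FreeMagma X) : ∀ n, F n (MonoidAlgebra.single (w : WithOne (FreeMagma X)) 1)
      = G n (MonoidAlgebra.single (w : WithOne (FreeMagma X)) 1) := by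
    induction w with
    | ih1 x => exact (h_gen · x)
    | ih2 a b ha hb =>
      intro n
      rw [single_coe_mul, hF n, hG n]
      exact sum_congr rfl fun pq _ => by rw [ha, hb]
  funext n
  refine MonoidAlgebra.lhom_ext' fun m => LinearMap.ext_ring ?_
  exact WithOne.cases_on m (h_one n) (h_coe · n)

variable [DecidableEq X] (i : X)

def evalMonomial : WithOne (FreeMagma X) →* Polynomial K :=
  WithOne.lift (FreeMagma.lift fun x => if x = i then Polynomial.X else 0)

def toPolynomial : FreeMagmaAlgebra K X →ₙₐ[K] Polynomial K :=
  MonoidAlgebra.liftMagma K (evalMonomial i).toMulHom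

def powCoeff (n : ℕ) : FreeMagmaAlgebra K X →ₗ[K] K :=
  Polynomial.lcoeff K n ∘ₗ (toPolynomial (K := K) i : FreeMagmaAlgebra K X →ₗ[K] Polynomial K)

theorem toPolynomial_single (m : WithOne (FreeMagma X)) (c : K) :
    toPolynomial i (MonoidAlgebra.single m c) = c • evalMonomial i m := by
  simp [toPolynomial, MonoidAlgebra.liftMagma_apply_apply]

theorem toPolynomial_one : toPolynomial (K := K) i 1 = 1 := by
  rw [MonoidAlgebra.one_def, toPolynomial_single]
  simp

theorem toPolynomial_gen (j : X) :
    toPolynomial (K := K) i (gen K j) = if j = i then Polynomial.X else 0 := by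
  rw [gen, MonoidAlgebra.of_apply, toPolynomial_single]
  simp [evalMonomial]

theorem higherLeibniz_powCoeff : HigherLeibniz (powCoeff (K := K) i) := by
  intro n f g
  simp [powCoeff, Polynomial.coeff_mul]

theorem sum_lapply_map_eq_powCoeff {n : ℕ} (hn : n ≠ 0) :
    ∑ s ∈ (FreeMagma.finite_setOf_length_eq n).toFinset,
      Finsupp.lapply ((FreeMagma.map (fun _ : Unit => i) s : FreeMagma X) : WithOne (FreeMagma X))
        ∘ₗ (MonoidAlgebra.coeffLinearEquiv K).toLinearMap
      = powCoeff i n := by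
  refine MonoidAlgebra.lhom_ext' fun m => LinearMap.ext_ring ?_
  simp only [powCoeff, LinearMap.comp_apply, LinearMap.sum_apply, MonoidAlgebra.lsingle_apply,
    LinearEquiv.coe_coe, MonoidAlgebra.coeffLinearEquiv_apply, MonoidAlgebra.coeff_single,
    Finsupp.lapply_apply, LinearMap.coe_coe, toPolynomial_single, one_smul,
    Polynomial.lcoeff_apply]
  classical
  refine WithOne.cases_on m ?_ fun w => ?_
  · simp [Polynomial.coeff_one, hn]
  by_cases hw : w ∈ Set.range (FreeMagma.map fun _ : Unit => i)
  · obtain ⟨s₀, rfl⟩ := hw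
    have hinj := FreeMagma.map_injective (Function.injective_of_subsingleton fun _ : Unit => i)
    simp only [Finsupp.single_apply, WithOne.coe_inj, hinj.eq_iff, sum_ite_eq,
      Set.Finite.mem_toFinset, evalMonomial, WithOne.lift_coe, FreeMagma.lift_map_const, if_pos,
      Polynomial.coeff_X_pow, Set.mem_ofPred_eq, eq_comm]
  · rw [evalMonomial, WithOne.lift_coe,
      FreeMagma.lift_eq_zero_of_notMem_range_map_const (fun c hc => if_neg hc) hw]
    refine sum_eq_zero fun s _ => ?_
    rw [Finsupp.single_apply, if_neg]
    exact fun h => hw ⟨s, (WithOne.coe_inj.1 h).symm⟩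

theorem finsum_DeltaS_map_eq_evalRight_powCoeff
    (Δ : FreeMagmaAlgebra K X →ₗ[K] FreeMagmaAlgebra K X ⊗[K] FreeMagmaAlgebra K X)
    {n : ℕ} (hn : n ≠ 0) (f : FreeMagmaAlgebra K X) :
    ∑ᶠ s ∈ {s : FreeMagma Unit | s.length = n},
        DeltaS Δ ((FreeMagma.map (fun _ => i) s : FreeMagma X) : WithOne (FreeMagma X)) f
      = evalRight (powCoeff i n) (Δ f) := by
  rw [finsum_mem_eq_finite_toFinset_sum _ (FreeMagma.finite_setOf_length_eq n),
    ← sum_lapply_map_eq_powCoeff i hn, ← sum_evalRight, LinearMap.sum_apply]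
  rfl

theorem evalRight_powCoeff_one_tmul_one (n : ℕ) :
    evalRight (powCoeff i n) ((1 : FreeMagmaAlgebra K X) ⊗ₜ[K] (1 : FreeMagmaAlgebra K X))
      = if n = 0 then 1 else 0 := by
  simp [powCoeff, toPolynomial_one, Polynomial.coeff_one]

theorem evalRight_powCoeff_gen_tmul_one_add (n : ℕ) (j : X) :
    evalRight (powCoeff i n)
        (gen K j ⊗ₜ[K] (1 : FreeMagmaAlgebra K X) + (1 : FreeMagmaAlgebra K X) ⊗ₜ[K] gen K j)
      = if n = 0 then gen K j else if n = 1 then (if j = i then 1 else 0 : K) • 1 else 0 := by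
  rcases n with _ | _ | n <;> by_cases h : j = i <;>
    simp [powCoeff, toPolynomial_one, toPolynomial_gen, Polynomial.coeff_one,
      Polynomial.coeff_X, h]

end FreeMagmaAlgebra

/-- The sum of `Δ_s` over all monomials `s` of degree `n` in the single
variable `x_i` equals `(1/n!)·D_i^n`, where `D_i` is the derivation with `D_i(x_i) = 1`,
`D_i(x_j) = 0` for `j ≠ i`. -/
theorem sum_DeltaS_eq_pow_derivation (K X : Type*) [Field K] [CharZero K]
    (Δ : FreeMagmaAlgebra K X →ₗ[K] FreeMagmaAlgebra K X ⊗[K] FreeMagmaAlgebra K X)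
    (hmul : ∀ f g : FreeMagmaAlgebra K X, Δ (f * g) = Δ f * Δ g)
    (hone : Δ 1 = 1 ⊗ₜ 1)
    (hgen : ∀ x : X, Δ (FreeMagmaAlgebra.gen K x) =
      FreeMagmaAlgebra.gen K x ⊗ₜ 1 + 1 ⊗ₜ FreeMagmaAlgebra.gen K x)
    (i : X)
    (D : FreeMagmaAlgebra K X →ₗ[K] FreeMagmaAlgebra K X)
    (hD : ∀ f g : FreeMagmaAlgebra K X, D (f * g) = D f * g + f * D g)
    (hDi : D (FreeMagmaAlgebra.gen K i) = 1)
    (hDj : ∀ j : X, j ≠ i → D (FreeMagmaAlgebra.gen K j) = 0)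
    (n : ℕ) (hn : 1 ≤ n) :
    ∀ f : FreeMagmaAlgebra K X,
      (∑ᶠ s ∈ {s : FreeMagma Unit | s.length = n},
          DeltaS Δ ((FreeMagma.map (fun _ => i) s : FreeMagma X) : WithOne (FreeMagma X)) f)
        = ((n.factorial : K))⁻¹ • (((D : Module.End K (FreeMagmaAlgebra K X)) ^ n) f) := by
  classical
  intro f
  have hD_gen (j : X) : D (FreeMagmaAlgebra.gen K j) = (if j = i then 1 else 0 : K) • 1 := by
    split_ifs with h
    · rw [h, hDi, one_smul]
    · rw [hDj j h, zero_smul]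
  have hL : HigherLeibniz fun n => TensorProduct.evalRight (FreeMagmaAlgebra.powCoeff i n) ∘ₗ Δ :=
    fun n f g => by
      rw [LinearMap.comp_apply, hmul]
      exact TensorProduct.higherLeibniz_evalRight (FreeMagmaAlgebra.higherLeibniz_powCoeff i) n _ _
  have key : (fun n => TensorProduct.evalRight (FreeMagmaAlgebra.powCoeff i n) ∘ₗ Δ)
      = fun n => (n.factorial : K)⁻¹ • (D : Module.End K (FreeMagmaAlgebra K X)) ^ n := by
    refine FreeMagmaAlgebra.ext_of_higherLeibniz hL (higherLeibniz_inv_factorial_smul_pow hD)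
      (fun n => ?_) (fun n j => ?_)
    · rw [LinearMap.comp_apply, hone, FreeMagmaAlgebra.evalRight_powCoeff_one_tmul_one,
        inv_factorial_smul_pow_apply_one hD]
    · rw [LinearMap.comp_apply, hgen, FreeMagmaAlgebra.evalRight_powCoeff_gen_tmul_one_add,
        inv_factorial_smul_pow_apply_of_map_eq_smul_one hD (hD_gen j)]
  rw [FreeMagmaAlgebra.finsum_DeltaS_map_eq_evalRight_powCoeff i Δ (by omega) f]
  exact LinearMap.congr_fun (congrFun key n) f
end
end

section
/- In the free magma algebra K{x} over the rationals, the element f = (x²)(x²) − 2·x·((x²)·x) + x·(x·(x²)) ∈ K{x} is primitive for the co-addition: Δ(f) = f⊗1 + 1⊗f. -/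
open scoped TensorProduct

noncomputable section

/-- In `K{x}` over the rationals, the element
`f = (x²)(x²) − 2·x·((x²)·x) + x·(x·(x²))` is primitive for the co-addition. -/
theorem explicit_primitive_degree_four
    (Δ : FreeMagmaAlgebra ℚ Unit →ₗ[ℚ] FreeMagmaAlgebra ℚ Unit ⊗[ℚ] FreeMagmaAlgebra ℚ Unit)
    (hmul : ∀ f g : FreeMagmaAlgebra ℚ Unit, Δ (f * g) = Δ f * Δ g)
    (hone : Δ 1 = 1 ⊗ₜ 1)
    (hgen : ∀ x : Unit, Δ (FreeMagmaAlgebra.gen ℚ x) =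
      FreeMagmaAlgebra.gen ℚ x ⊗ₜ 1 + 1 ⊗ₜ FreeMagmaAlgebra.gen ℚ x) :
    ∀ x : FreeMagmaAlgebra ℚ Unit, x = FreeMagmaAlgebra.gen ℚ () →
      Δ ((x * x) * (x * x) - (2 : ℚ) • (x * ((x * x) * x)) + x * (x * (x * x))) =
        ((x * x) * (x * x) - (2 : ℚ) • (x * ((x * x) * x)) + x * (x * (x * x))) ⊗ₜ 1 +
          1 ⊗ₜ ((x * x) * (x * x) - (2 : ℚ) • (x * ((x * x) * x)) + x * (x * (x * x))) := by
  intro x hx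
  simp only [map_add, map_sub, map_smul, hmul, hx, hgen]
  simp only [Algebra.TensorProduct.tmul_mul_tmul, add_mul, mul_add, one_mul, mul_one,
    smul_add, smul_sub, TensorProduct.tmul_sub, TensorProduct.sub_tmul,
    TensorProduct.tmul_add, TensorProduct.add_tmul, ← TensorProduct.smul_tmul',
    TensorProduct.tmul_smul]
  module
end
end

section
/- Let K be a field of characteristic 0 and K{{x}} the completed free magma algebra in one variable. Let exp(x) = 1 + Σ_{t∈M(x)} a(t)t be the unique power series with constant term 1 and linear coefficient a(x)=1 satisfying exp(x)·exp(x) = exp(2x). Then in K{{x}} ⊗̂ K{{x}}, exp(x⊗1 + 1⊗x) = exp(x) ⊗ exp(x). -/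
noncomputable section

namespace Stmt17

/-- Monomials of the completed free magma algebra `K{{x}}`: the free magma on one
generator together with an adjoined unit (empty tree).  A power series in `K{{x}}`
is a function from monomials to `K`. -/
abbrev W : Type := WithOne (FreeMagma Unit)

open Classical in
/-- All factorizations of a monomial as an ordered product of two monomials:
`1 = 1·1`, `x = 1·x = x·1`, and `t₁t₂ = 1·(t₁t₂) = (t₁t₂)·1 = t₁·t₂`. -/
def fac : W → Finset (W × W) :=
  WithOne.recOneCoe {((1 : W), (1 : W))} fun t =>
    match t with
    | FreeMagma.of x =>
        {((1 : W), ((FreeMagma.of x : FreeMagma Unit) : W)),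
         (((FreeMagma.of x : FreeMagma Unit) : W), (1 : W))}
    | FreeMagma.mul t₁ t₂ =>
        {((1 : W), ((t₁.mul t₂ : FreeMagma Unit) : W)),
         (((t₁.mul t₂ : FreeMagma Unit) : W), (1 : W)),
         ((t₁ : W), (t₂ : W))}

/-- Degree of a monomial. -/
def degW : W → ℕ := WithOne.recOneCoe 0 fun t => t.length

variable (K : Type*) [Field K]

/-- The (convolution) product of two power series in `K{{x}}`. -/
def conv (f g : W → K) : W → K := fun m => ∑ p ∈ fac m, f p.1 * g p.2

/-- The product on the completed tensor product `K{{x}} ⊗̂ K{{x}}`, viewed as functions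
on pairs of monomials, with componentwise multiplication `(a⊗b)(c⊗d) = ac ⊗ bd`. -/
def conv2 (F G : W × W → K) : W × W → K :=
  fun p => ∑ q ∈ fac p.1 ×ˢ fac p.2, F (q.1.1, q.2.1) * G (q.1.2, q.2.2)

/-- Evaluation of a non-associative monomial (planar binary tree) `t` at an element `g`
of a magma with multiplication `mul`. -/
def evalTree {B : Type*} (mul : B → B → B) (g : B) : FreeMagma Unit → B
  | FreeMagma.of _ => g
  | FreeMagma.mul t₁ t₂ => mul (evalTree mul g t₁) (evalTree mul g t₂)

/-- Substitution of an element `H` (of order ≥ 1) into a one-variable power series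
`f = f(1)·1 + Σ_t f(t)·t`. -/
def compS {B : Type*} (mulB : (B → K) → (B → K) → (B → K)) (oneB : B → K)
    (f : W → K) (H : B → K) : B → K :=
  fun b => f 1 * oneB b + ∑ᶠ t : FreeMagma Unit, f ↑t * evalTree mulB H t b

open Classical in
/-- The series `x⊗1 + 1⊗x` in `K{{x}} ⊗̂ K{{x}}`. -/
def xOnePlusOneX : W × W → K := fun p =>
  (if p = (((FreeMagma.of () : FreeMagma Unit) : W), (1 : W)) then (1 : K) else 0) +
  (if p = ((1 : W), ((FreeMagma.of () : FreeMagma Unit) : W)) then (1 : K) else 0)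

section AuxDev
open Classical

abbrev x₀ : W := ((FreeMagma.of () : FreeMagma Unit) : W)

lemma W_cases (m : W) : m = 1 ∨ ∃ t : FreeMagma Unit, m = ↑t := by
  cases m with
  | none => exact Or.inl rfl
  | some t => exact Or.inr ⟨t, rfl⟩

lemma fac_one : fac 1 = {((1:W),(1:W))} := rfl
lemma fac_of : fac x₀ = {((1:W), x₀), (x₀, (1:W))} := rfl
lemma fac_mul (t₁ t₂ : FreeMagma Unit) :
    fac ↑(t₁.mul t₂) = {((1:W), (↑(t₁.mul t₂) : W)), ((↑(t₁.mul t₂) : W), (1:W)), ((t₁:W), (t₂:W))} := rfl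
@[simp] lemma degW_one : degW 1 = 0 := rfl
@[simp] lemma degW_coe (t : FreeMagma Unit) : degW ↑t = t.length := rfl

lemma degW_eq_zero {m : W} (h : degW m = 0) : m = 1 := by
  obtain rfl | ⟨t, rfl⟩ := W_cases m
  · rfl
  · exact absurd h (by simpa using t.length_pos.ne')

lemma degW_eq_one {m : W} (h : degW m = 1) : m = x₀ := by
  obtain rfl | ⟨t, rfl⟩ := W_cases m
  · simp at h
  · cases t with
    | of x => rfl
    | mul a b =>
      simp only [degW_coe, FreeMagma.length] at h
      have := a.length_pos; have := b.length_pos; omega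

lemma one_mem_fac (m : W) : ((1:W), m) ∈ fac m := by
  obtain rfl | ⟨t, rfl⟩ := W_cases m
  · simp [fac_one]
  · cases t with
    | of x => cases x; rw [fac_of]; exact Finset.mem_insert_self _ _
    | mul a b => rw [fac_mul]; exact Finset.mem_insert_self _ _

lemma mem_fac_one (m : W) : (m, (1:W)) ∈ fac m := by
  obtain rfl | ⟨t, rfl⟩ := W_cases m
  · simp [fac_one]
  · cases t with
    | of x =>
      cases x; rw [fac_of]
      exact Finset.mem_insert_of_mem (Finset.mem_singleton_self _)
    | mul a b =>
      rw [fac_mul]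
      exact Finset.mem_insert_of_mem (Finset.mem_insert_self _ _)

lemma fac_deg {m : W} {q : W × W} (hq : q ∈ fac m) : degW q.1 + degW q.2 = degW m := by
  obtain rfl | ⟨t, rfl⟩ := W_cases m
  · simp [fac_one] at hq; subst hq; rfl
  · cases t with
    | of x =>
      cases x; rw [fac_of] at hq
      rcases Finset.mem_insert.1 hq with h | h
      · subst h; simp
      · rw [Finset.mem_singleton] at h; subst h; simp
    | mul a b =>
      rw [fac_mul] at hq
      rcases Finset.mem_insert.1 hq with h | h
      · subst h; simp
      · rcases Finset.mem_insert.1 h with h | h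
        · subst h; simp
        · rw [Finset.mem_singleton] at h; subst h; rfl

lemma fac_fst_one {m v : W} (h : ((1:W), v) ∈ fac m) : v = m := by
  obtain rfl | ⟨t, rfl⟩ := W_cases m
  · simpa [fac_one, Prod.ext_iff] using h
  · cases t with
    | of x =>
      cases x; rw [fac_of] at h
      simp only [Finset.mem_insert, Finset.mem_singleton, Prod.mk.injEq] at h
      rcases h with ⟨-, rfl⟩ | ⟨h1, -⟩
      · rfl
      · exact absurd h1.symm WithOne.coe_ne_one
    | mul a b =>
      rw [fac_mul] at h
      simp only [Finset.mem_insert, Finset.mem_singleton, Prod.mk.injEq] at h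
      rcases h with ⟨-, rfl⟩ | ⟨h1, -⟩ | ⟨h1, -⟩
      · rfl
      · exact absurd h1.symm WithOne.coe_ne_one
      · exact absurd h1.symm WithOne.coe_ne_one

lemma fac_snd_one {m u : W} (h : (u, (1:W)) ∈ fac m) : u = m := by
  obtain rfl | ⟨t, rfl⟩ := W_cases m
  · simpa [fac_one, Prod.ext_iff] using h
  · cases t with
    | of x =>
      cases x; rw [fac_of] at h
      simp only [Finset.mem_insert, Finset.mem_singleton, Prod.mk.injEq] at h
      rcases h with ⟨-, h1⟩ | ⟨rfl, -⟩
      · exact absurd h1 WithOne.one_ne_coe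
      · rfl
    | mul a b =>
      rw [fac_mul] at h
      simp only [Finset.mem_insert, Finset.mem_singleton, Prod.mk.injEq] at h
      rcases h with ⟨-, h1⟩ | ⟨rfl, -⟩ | ⟨-, h1⟩
      · exact absurd h1 WithOne.one_ne_coe
      · rfl
      · exact absurd h1 WithOne.one_ne_coe

lemma finite_len (n : ℕ) : {t : FreeMagma Unit | t.length = n}.Finite := by
  induction n using Nat.strong_induction_on with
  | _ n ih =>
    rcases Nat.eq_zero_or_pos n with rfl | hn
    · convert Set.finite_empty
      ext t; simpa using t.length_pos.ne'
    · apply Set.Finite.subset (s := {FreeMagma.of ()} ∪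
        ⋃ i ∈ Set.Ico 1 n, Set.image2 FreeMagma.mul {t : FreeMagma Unit | t.length = i} {t : FreeMagma Unit | t.length = n - i})
      · apply Set.Finite.union (Set.finite_singleton _)
        apply Set.Finite.biUnion (Set.finite_Ico 1 n)
        intro i hi
        simp only [Set.mem_Ico] at hi
        exact Set.Finite.image2 _ (ih i hi.2) (ih (n - i) (by omega))
      · intro t ht
        simp only [Set.mem_setOf_eq] at ht
        cases t with
        | of x => left; simp
        | mul a b =>
          right
          have ha := a.length_pos; have hb := b.length_pos
          simp only [FreeMagma.length] at ht
          refine Set.mem_biUnion (show a.length ∈ Set.Ico 1 n by constructor <;> omega) ?_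
          exact ⟨a, by simp, b, by simp; omega, rfl⟩

lemma xH_supp {c : W × W} (h : xOnePlusOneX K c ≠ 0) : degW c.1 + degW c.2 = 1 := by
  by_cases h1 : c = (x₀, (1:W))
  · subst h1; rfl
  · by_cases h2 : c = ((1:W), x₀)
    · subst h2; rfl
    · exact absurd (by simp [xOnePlusOneX, h1, h2]) h

lemma Tt_supp (t : FreeMagma Unit) :
    ∀ c : W × W, evalTree (conv2 K) (xOnePlusOneX K) t c ≠ 0 →
      degW c.1 + degW c.2 = t.length := by
  induction t using FreeMagma.rec with
  | of x =>
    cases x; intro c h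
    exact xH_supp K h
  | mul a b iha ihb =>
    intro c h
    rw [show evalTree (conv2 K) (xOnePlusOneX K) (a.mul b)
          = conv2 K (evalTree (conv2 K) (xOnePlusOneX K) a)
              (evalTree (conv2 K) (xOnePlusOneX K) b) from rfl] at h
    obtain ⟨q, hq, hne⟩ := Finset.exists_ne_zero_of_sum_ne_zero h
    have h1 := iha _ (left_ne_zero_of_mul hne)
    have h2 := ihb _ (right_ne_zero_of_mul hne)
    rw [Finset.mem_product] at hq
    have d1 := fac_deg hq.1
    have d2 := fac_deg hq.2
    simp only [FreeMagma.length] at *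
    omega

lemma finsum_eval (E : W → K) (c : W × W) :
    ∑ᶠ t : FreeMagma Unit, E ↑t * evalTree (conv2 K) (xOnePlusOneX K) t c
      = ∑ t ∈ (finite_len (degW c.1 + degW c.2)).toFinset,
          E ↑t * evalTree (conv2 K) (xOnePlusOneX K) t c := by
  apply finsum_eq_sum_of_support_subset
  intro t ht
  simp only [Function.mem_support] at ht
  simp only [Set.Finite.coe_toFinset, Set.mem_setOf_eq]
  exact (Tt_supp K t c (right_ne_zero_of_mul ht)).symm


lemma len_eq_one {t : FreeMagma Unit} (h : t.length = 1) : t = FreeMagma.of () := by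
  have h2 : (t : W) = x₀ := degW_eq_one (by simpa using h)
  exact WithOne.coe_inj.1 h2

def unmul : FreeMagma Unit → FreeMagma Unit × FreeMagma Unit
  | FreeMagma.of _ => (FreeMagma.of (), FreeMagma.of ())
  | FreeMagma.mul a b => (a, b)

lemma finite_pairs (n : ℕ) :
    {u : FreeMagma Unit × FreeMagma Unit | u.1.length + u.2.length = n}.Finite := by
  apply Set.Finite.subset (s := ⋃ i ∈ Set.Iic n,
    {t : FreeMagma Unit | t.length = i} ×ˢ {t : FreeMagma Unit | t.length = n - i})
  · exact (Set.finite_Iic n).biUnion fun i _ => (finite_len i).prod (finite_len (n - i))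
  · intro u hu
    simp only [Set.mem_setOf_eq] at hu
    refine Set.mem_biUnion (show u.1.length ∈ Set.Iic n by simp; omega) ?_
    constructor
    · simp
    · simp only [Set.mem_setOf_eq]; omega

lemma sum_len_eq_sum_pairs {M : Type*} [AddCommMonoid M] (f : FreeMagma Unit → M) (n : ℕ)
    (hn : 2 ≤ n) :
    ∑ t ∈ (finite_len n).toFinset, f t
      = ∑ u ∈ (finite_pairs n).toFinset, f (u.1.mul u.2) := by
  apply Finset.sum_nbij' (i := unmul) (j := fun u => u.1.mul u.2)
  · intro t ht
    simp only [Set.Finite.mem_toFinset, Set.mem_setOf_eq] at ht ⊢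
    cases t with
    | of x => simp at ht; omega
    | mul a b => simpa [unmul, FreeMagma.length] using ht
  · intro u hu
    simp only [Set.Finite.mem_toFinset, Set.mem_setOf_eq] at hu ⊢
    simpa [FreeMagma.length] using hu
  · intro t ht
    simp only [Set.Finite.mem_toFinset, Set.mem_setOf_eq] at ht
    cases t with
    | of x => simp at ht; omega
    | mul a b => rfl
  · intro u hu; rfl
  · intro t ht
    simp only [Set.Finite.mem_toFinset, Set.mem_setOf_eq] at ht
    cases t with
    | of x => simp at ht; omega
    | mul a b => rfl

section Main

variable {K' : Type*} [Field K'] (E : W → K')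

lemma hErec (hE1 : E 1 = 1)
    (hEfac : ∀ m : W, ∑ q ∈ fac m, E q.1 * E q.2 = (2:K') ^ degW m * E m)
    (a b : FreeMagma Unit) :
    ((2:K') ^ (a.length + b.length) - 2) * E ↑(a.mul b) = E ↑a * E ↑b := by
  have h := hEfac ↑(a.mul b)
  rw [fac_mul] at h
  rw [Finset.sum_insert (by
        simp only [Finset.mem_insert, Finset.mem_singleton, Prod.mk.injEq]
        push_neg
        exact ⟨fun h1 => absurd h1.symm WithOne.coe_ne_one,
               fun h1 => absurd h1.symm WithOne.coe_ne_one⟩),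
      Finset.sum_insert (by
        simp only [Finset.mem_singleton, Prod.mk.injEq]
        push_neg
        intro _
        exact fun h2 => WithOne.one_ne_coe h2),
      Finset.sum_singleton] at h
  simp only [hE1, one_mul, mul_one] at h
  have hdeg : degW (↑(a.mul b) : W) = a.length + b.length := rfl
  rw [hdeg] at h
  linear_combination -h

lemma main_ind [CharZero K'] (hE1 : E 1 = 1)
    (hEx : E x₀ = 1)
    (hEfac : ∀ m : W, ∑ q ∈ fac m, E q.1 * E q.2 = (2:K') ^ degW m * E m) :
    ∀ n : ℕ, ∀ c : W × W, degW c.1 + degW c.2 = n →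
      (∑ᶠ t : FreeMagma Unit, E ↑t * evalTree (conv2 K') (xOnePlusOneX K') t c)
        = if c = ((1:W), (1:W)) then 0 else E c.1 * E c.2 := by
  intro n
  induction n using Nat.strong_induction_on with
  | _ n ih =>
  intro c hc
  rw [finsum_eval, hc]
  rcases Nat.lt_or_ge n 2 with hn2 | hn2
  · interval_cases n
    · -- n = 0
      have h1 : c.1 = 1 := degW_eq_zero (by omega)
      have h2 : c.2 = 1 := degW_eq_zero (by omega)
      have hcc : c = ((1:W), (1:W)) := Prod.ext h1 h2
      rw [if_pos hcc]
      apply Finset.sum_eq_zero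
      intro t ht
      simp only [Set.Finite.mem_toFinset, Set.mem_setOf_eq] at ht
      exact absurd ht t.length_pos.ne'
    · -- n = 1
      have hcne : c ≠ ((1:W), (1:W)) := by
        intro hcc; rw [hcc] at hc; simp at hc
      rw [if_neg hcne]
      rw [Finset.sum_eq_single (FreeMagma.of ())]
      · show E x₀ * xOnePlusOneX K' c = E c.1 * E c.2
        rw [hEx, one_mul]
        rcases Nat.lt_or_ge (degW c.1) 1 with h1 | h1
        · have hc1 : c.1 = 1 := degW_eq_zero (by omega)
          have hc2 : c.2 = x₀ := degW_eq_one (by omega)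
          have hcc : c = ((1:W), x₀) := Prod.ext hc1 hc2
          rw [hcc]
          show xOnePlusOneX K' ((1:W), x₀) = E 1 * E x₀
          rw [hE1, hEx]
          simp [xOnePlusOneX, Prod.ext_iff]
        · have hc1 : c.1 = x₀ := degW_eq_one (by omega)
          have hc2 : c.2 = 1 := degW_eq_zero (by omega)
          have hcc : c = (x₀, (1:W)) := Prod.ext hc1 hc2
          rw [hcc]
          show xOnePlusOneX K' (x₀, (1:W)) = E x₀ * E 1
          rw [hE1, hEx]
          simp [xOnePlusOneX, Prod.ext_iff]
      · intro t ht htne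
        simp only [Set.Finite.mem_toFinset, Set.mem_setOf_eq] at ht
        exact absurd (len_eq_one ht) htne
      · intro hnot
        exact absurd (by simp only [Set.Finite.mem_toFinset, Set.mem_setOf_eq]; rfl) hnot
  · -- n ≥ 2
    have hcne : c ≠ ((1:W), (1:W)) := by
      intro hcc; rw [hcc] at hc; simp at hc; omega
    rw [if_neg hcne]
    have h4 : (4:ℕ) ≤ 2 ^ n := by
      calc (4:ℕ) = 2 ^ 2 := rfl
      _ ≤ 2 ^ n := Nat.pow_le_pow_right (by norm_num) hn2
    have h2n : ((2:K') ^ n - 2) ≠ 0 := by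
      have : ((2:K') ^ n - 2) = ((2 ^ n - 2 : ℕ) : K') := by
        push_cast [Nat.cast_sub (by omega : 2 ≤ 2 ^ n)]
        ring
      rw [this]
      exact Nat.cast_ne_zero.2 (by omega)
    apply mul_left_cancel₀ h2n
    rw [Finset.mul_sum, sum_len_eq_sum_pairs _ n hn2]
    have step1 : ∀ u ∈ (finite_pairs n).toFinset,
        ((2:K') ^ n - 2) * (E ↑(u.1.mul u.2) * evalTree (conv2 K') (xOnePlusOneX K') (u.1.mul u.2) c)
          = ∑ q ∈ fac c.1 ×ˢ fac c.2,
              E ↑u.1 * E ↑u.2 *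
                (evalTree (conv2 K') (xOnePlusOneX K') u.1 (q.1.1, q.2.1) *
                 evalTree (conv2 K') (xOnePlusOneX K') u.2 (q.1.2, q.2.2)) := by
      intro u hu
      simp only [Set.Finite.mem_toFinset, Set.mem_setOf_eq] at hu
      rw [show evalTree (conv2 K') (xOnePlusOneX K') (u.1.mul u.2)
            = conv2 K' (evalTree (conv2 K') (xOnePlusOneX K') u.1)
                (evalTree (conv2 K') (xOnePlusOneX K') u.2) from rfl]
      rw [show conv2 K' (evalTree (conv2 K') (xOnePlusOneX K') u.1)
            (evalTree (conv2 K') (xOnePlusOneX K') u.2) c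
          = ∑ q ∈ fac c.1 ×ˢ fac c.2,
              evalTree (conv2 K') (xOnePlusOneX K') u.1 (q.1.1, q.2.1) *
              evalTree (conv2 K') (xOnePlusOneX K') u.2 (q.1.2, q.2.2) from rfl]
      rw [← mul_assoc, show ((2:K') ^ n - 2) * E ↑(u.1.mul u.2) = E ↑u.1 * E ↑u.2 by
        rw [← hu]; exact hErec E hE1 hEfac u.1 u.2]
      rw [Finset.mul_sum]
    rw [Finset.sum_congr rfl step1, Finset.sum_comm]
    have step2 : ∀ q ∈ fac c.1 ×ˢ fac c.2,
        ∑ u ∈ (finite_pairs n).toFinset,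
            E ↑u.1 * E ↑u.2 *
              (evalTree (conv2 K') (xOnePlusOneX K') u.1 (q.1.1, q.2.1) *
               evalTree (conv2 K') (xOnePlusOneX K') u.2 (q.1.2, q.2.2))
          = (∑ᶠ t : FreeMagma Unit, E ↑t * evalTree (conv2 K') (xOnePlusOneX K') t (q.1.1, q.2.1)) *
            (∑ᶠ t : FreeMagma Unit, E ↑t * evalTree (conv2 K') (xOnePlusOneX K') t (q.1.2, q.2.2)) := by
      intro q hq
      rw [Finset.mem_product] at hq
      have dd1 := fac_deg hq.1
      have dd2 := fac_deg hq.2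
      have hEV1 := finsum_eval K' E (q.1.1, q.2.1)
      have hEV2 := finsum_eval K' E (q.1.2, q.2.2)
      dsimp only at hEV1 hEV2
      rw [hEV1, hEV2, Finset.sum_mul_sum]
      have hsub : ((finite_len (degW q.1.1 + degW q.2.1)).toFinset ×ˢ
            (finite_len (degW q.1.2 + degW q.2.2)).toFinset)
          ⊆ (finite_pairs n).toFinset := by
        intro u hu
        simp only [Finset.mem_product, Set.Finite.mem_toFinset, Set.mem_setOf_eq] at hu ⊢
        omega
      rw [← Finset.sum_product']
      refine (Finset.sum_subset hsub ?_).symm.trans (Finset.sum_congr rfl fun u _ => by ring)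
      intro u hu hnotin
      simp only [Finset.mem_product, Set.Finite.mem_toFinset, Set.mem_setOf_eq] at hu hnotin
      have hu1 : u.1.length ≠ degW q.1.1 + degW q.2.1 := by
        intro h1
        exact hnotin ⟨h1, by omega⟩
      have hz : evalTree (conv2 K') (xOnePlusOneX K') u.1 (q.1.1, q.2.1) = 0 := by
        by_contra hne
        have := Tt_supp K' u.1 _ hne
        dsimp only at this
        exact hu1 this.symm
      rw [show E ↑u.1 * E ↑u.2 * (evalTree (conv2 K') (xOnePlusOneX K') u.1 (q.1.1, q.2.1) *
               evalTree (conv2 K') (xOnePlusOneX K') u.2 (q.1.2, q.2.2))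
          = (E ↑u.1 * E ↑u.2 * evalTree (conv2 K') (xOnePlusOneX K') u.2 (q.1.2, q.2.2)) *
            evalTree (conv2 K') (xOnePlusOneX K') u.1 (q.1.1, q.2.1) from by ring,
        hz, mul_zero]
    rw [Finset.sum_congr rfl step2]
    have hd1mem : (((1:W), c.1), ((1:W), c.2)) ∈ fac c.1 ×ˢ fac c.2 :=
      Finset.mem_product.2 ⟨one_mem_fac c.1, one_mem_fac c.2⟩
    have hd2mem : ((c.1, (1:W)), (c.2, (1:W))) ∈ fac c.1 ×ˢ fac c.2 :=
      Finset.mem_product.2 ⟨mem_fac_one c.1, mem_fac_one c.2⟩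
    have hd12 : (((1:W), c.1), ((1:W), c.2)) ≠ ((c.1, (1:W)), (c.2, (1:W))) := by
      intro h
      apply hcne
      have h1 : (1:W) = c.1 := (Prod.ext_iff.1 (Prod.ext_iff.1 h).1).1
      have h2 : (1:W) = c.2 := (Prod.ext_iff.1 (Prod.ext_iff.1 h).2).1
      exact Prod.ext h1.symm h2.symm
    have hA00 : (∑ᶠ t : FreeMagma Unit,
        E ↑t * evalTree (conv2 K') (xOnePlusOneX K') t ((1:W), (1:W))) = 0 := by
      have h0 := ih 0 (by omega) ((1:W), (1:W)) (by simp)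
      rwa [if_pos rfl] at h0
    have key : ∀ q ∈ fac c.1 ×ˢ fac c.2,
        (∑ᶠ t : FreeMagma Unit, E ↑t * evalTree (conv2 K') (xOnePlusOneX K') t (q.1.1, q.2.1)) *
        (∑ᶠ t : FreeMagma Unit, E ↑t * evalTree (conv2 K') (xOnePlusOneX K') t (q.1.2, q.2.2))
          = (E q.1.1 * E q.1.2) * (E q.2.1 * E q.2.2)
            - (if q = (((1:W), c.1), ((1:W), c.2)) then
                 (E q.1.1 * E q.1.2) * (E q.2.1 * E q.2.2) else 0)
            - (if q = ((c.1, (1:W)), (c.2, (1:W))) then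
                 (E q.1.1 * E q.1.2) * (E q.2.1 * E q.2.2) else 0) := by
      intro q hq
      rw [Finset.mem_product] at hq
      have dd1 := fac_deg hq.1
      have dd2 := fac_deg hq.2
      by_cases hqd1 : q = (((1:W), c.1), ((1:W), c.2))
      · rw [hqd1, if_pos rfl, if_neg hd12]
        dsimp only
        rw [hA00, zero_mul]
        ring
      · by_cases hqd2 : q = ((c.1, (1:W)), (c.2, (1:W)))
        · rw [hqd2, if_neg (Ne.symm hd12), if_pos rfl]
          dsimp only
          rw [hA00, mul_zero]
          ring
        · have ha' : ¬(q.1.1 = 1 ∧ q.2.1 = 1) := by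
            rintro ⟨h1, h2⟩
            apply hqd1
            have e1 : q.1 = ((1:W), c.1) := by
              have hm : ((1:W), q.1.2) ∈ fac c.1 := by
                rw [show ((1:W), q.1.2) = q.1 from Prod.ext_iff.2 ⟨h1.symm, rfl⟩]; exact hq.1
              exact Prod.ext_iff.2 ⟨h1, fac_fst_one hm⟩
            have e2 : q.2 = ((1:W), c.2) := by
              have hm : ((1:W), q.2.2) ∈ fac c.2 := by
                rw [show ((1:W), q.2.2) = q.2 from Prod.ext_iff.2 ⟨h2.symm, rfl⟩]; exact hq.2
              exact Prod.ext_iff.2 ⟨h2, fac_fst_one hm⟩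
            exact Prod.ext_iff.2 ⟨e1, e2⟩
          have hb' : ¬(q.1.2 = 1 ∧ q.2.2 = 1) := by
            rintro ⟨h1, h2⟩
            apply hqd2
            have e1 : q.1 = (c.1, (1:W)) := by
              have hm : (q.1.1, (1:W)) ∈ fac c.1 := by
                rw [show (q.1.1, (1:W)) = q.1 from Prod.ext_iff.2 ⟨rfl, h1.symm⟩]; exact hq.1
              exact Prod.ext_iff.2 ⟨fac_snd_one hm, h1⟩
            have e2 : q.2 = (c.2, (1:W)) := by
              have hm : (q.2.1, (1:W)) ∈ fac c.2 := by
                rw [show (q.2.1, (1:W)) = q.2 from Prod.ext_iff.2 ⟨rfl, h2.symm⟩]; exact hq.2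
              exact Prod.ext_iff.2 ⟨fac_snd_one hm, h2⟩
            exact Prod.ext_iff.2 ⟨e1, e2⟩
          have hna1 : 1 ≤ degW q.1.1 + degW q.2.1 := by
            by_contra h
            push_neg at h
            exact ha' ⟨degW_eq_zero (by omega), degW_eq_zero (by omega)⟩
          have hnb1 : 1 ≤ degW q.1.2 + degW q.2.2 := by
            by_contra h
            push_neg at h
            exact hb' ⟨degW_eq_zero (by omega), degW_eq_zero (by omega)⟩
          have hAa := ih (degW q.1.1 + degW q.2.1) (by omega) (q.1.1, q.2.1) rfl
          have hAb := ih (degW q.1.2 + degW q.2.2) (by omega) (q.1.2, q.2.2) rfl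
          rw [if_neg (by
            intro h
            exact ha' ⟨(Prod.ext_iff.1 h).1, (Prod.ext_iff.1 h).2⟩)] at hAa
          rw [if_neg (by
            intro h
            exact hb' ⟨(Prod.ext_iff.1 h).1, (Prod.ext_iff.1 h).2⟩)] at hAb
          rw [hAa, hAb, if_neg hqd1, if_neg hqd2]
          ring
    rw [Finset.sum_congr rfl key]
    rw [Finset.sum_sub_distrib, Finset.sum_sub_distrib]
    rw [Finset.sum_ite_eq' _ (((1:W), c.1), ((1:W), c.2)), if_pos hd1mem]
    rw [Finset.sum_ite_eq' _ ((c.1, (1:W)), (c.2, (1:W))), if_pos hd2mem]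
    rw [Finset.sum_product]
    dsimp only
    rw [← Finset.sum_mul_sum, hEfac c.1, hEfac c.2]
    have hpow : (2:K') ^ degW c.1 * (2:K') ^ degW c.2 = (2:K') ^ n := by
      rw [← pow_add, hc]
    simp only [hE1, one_mul]
    linear_combination (E c.1 * E c.2) * hpow

end Main
end AuxDev

open Classical in
/-- Let `exp(x) = 1 + Σ_t a(t)t ∈ K{{x}}` be the unique power series
with constant term 1, linear coefficient 1, satisfying `exp(x)·exp(x) = exp(2x)`.
Then `exp(x⊗1 + 1⊗x) = exp(x) ⊗ exp(x)` in `K{{x}} ⊗̂ K{{x}}`. -/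
theorem exp_of_coaddition [CharZero K] (E : W → K)
    (hE1 : E 1 = 1)
    (hEx : E ((FreeMagma.of () : FreeMagma Unit) : W) = 1)
    (hfunc : conv K E E = fun m => (2 : K) ^ degW m * E m) :
    compS K (conv2 K) (fun p => if p = ((1 : W), (1 : W)) then 1 else 0) E (xOnePlusOneX K)
      = fun p => E p.1 * E p.2 := by
  have hEfac : ∀ m : W, ∑ q ∈ fac m, E q.1 * E q.2 = (2 : K) ^ degW m * E m :=
    fun m => congrFun hfunc m
  funext p
  show E 1 * (if p = ((1 : W), (1 : W)) then 1 else 0) +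
      (∑ᶠ t : FreeMagma Unit, E ↑t * evalTree (conv2 K) (xOnePlusOneX K) t p)
    = E p.1 * E p.2
  have hmain := main_ind E hE1 hEx hEfac (degW p.1 + degW p.2) p rfl
  by_cases hp : p = ((1 : W), (1 : W))
  · rw [hp] at hmain ⊢
    rw [if_pos rfl] at hmain
    rw [if_pos rfl, hmain, hE1]
    norm_num
  · rw [if_neg hp] at hmain ⊢
    rw [hmain, mul_zero, zero_add]


end Stmt17
end
end
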